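/- arXiv:1806.00199 — 6 statements merged into one kernel-verified Lean document; each statement's English description precedes it below -/
import Mathlib

section
/- For any integers a₀,a₁,a₂,a₃,b₀,b₁,b₂,b₃, the integer ℓ₁ℓ₂ℓ₃ℓ₄·q₃·q₄ (the Z₄×Z₂ group determinant) is congruent to 1 mod 8 if it is odd, and divisible by 2⁸ if it is even. -/
private lemma diffsq_odd (x y : ℤ) : ∃ m, (2*x+1)^2 - (2*y+1)^2 = 8*m := by
  rcases Int.even_or_odd (x - y) with ⟨m, hm⟩ | ⟨m, hm⟩
  · exact ⟨m*(x+y+1), by linear_combination (4*(x+y+1))*hm⟩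
  · exact ⟨(x-y)*(m+y+1), by linear_combination (4*(x-y))*hm⟩

private lemma lemEE (c d g h g' h' x y : ℤ) :
    (2:ℤ)^8 ∣ ((2*x)^2 - (2*y)^2) * ((2*x-2*c)^2 - (2*y-2*d)^2) *
      ((2*x-2*g)^2 + (2*y-2*h)^2) * ((2*x-2*g')^2 + (2*y-2*h')^2) :=
  ⟨(x^2-y^2)*((x-c)^2-(y-d)^2)*((x-g)^2+(y-h)^2)*((x-g')^2+(y-h')^2), by ring⟩

private lemma lemOO (c d g h g' h' x y : ℤ) :
    (2:ℤ)^8 ∣ ((2*x+1)^2 - (2*y+1)^2) * ((2*(x-c)+1)^2 - (2*(y-d)+1)^2) *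
      ((2*(x-g)+1)^2 + (2*(y-h)+1)^2) * ((2*(x-g')+1)^2 + (2*(y-h')+1)^2) := by
  obtain ⟨m₁, hm₁⟩ := diffsq_odd x y
  obtain ⟨m₂, hm₂⟩ := diffsq_odd (x-c) (y-d)
  refine ⟨m₁ * m₂ * (2*(x-g)^2+2*(x-g)+2*(y-h)^2+2*(y-h)+1) *
    (2*(x-g')^2+2*(x-g')+2*(y-h')^2+2*(y-h')+1), ?_⟩
  rw [hm₁, hm₂]; ring

private lemma lemEO (c d h h' g g' e x y : ℤ) (he : c + g + g' = 2*e) :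
    (((2*x)^2 - (2*y+1)^2) * ((2*x-2*c)^2 - (2*(y-d)+1)^2) *
      ((2*x-2*g)^2 + (2*(y-h)+1)^2) * ((2*x-2*g')^2 + (2*(y-h')+1)^2)) % 8 = 1 := by
  obtain rfl : c = 2*e - g - g' := by omega
  obtain ⟨r₁, hr₁⟩ := Int.even_mul_succ_self (x-1)
  obtain ⟨r₂, hr₂⟩ := Int.even_mul_succ_self y
  obtain ⟨r₃, hr₃⟩ := Int.even_mul_succ_self (x-(2*e-g-g')-1)
  obtain ⟨r₄, hr₄⟩ := Int.even_mul_succ_self (y-d)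
  obtain ⟨r₅, hr₅⟩ := Int.even_mul_succ_self (x-g-1)
  obtain ⟨r₆, hr₆⟩ := Int.even_mul_succ_self (y-h)
  obtain ⟨r₇, hr₇⟩ := Int.even_mul_succ_self (x-g'-1)
  obtain ⟨r₈, hr₈⟩ := Int.even_mul_succ_self (y-h')
  have h1 : ((2*x)^2 - (2*y+1)^2) ≡ 4*x - 1 [ZMOD 8] :=
    Int.modEq_iff_dvd.mpr ⟨r₂ - r₁, by linear_combination 4*hr₂ - 4*hr₁⟩
  have h2 : ((2*x-2*(2*e-g-g'))^2 - (2*(y-d)+1)^2) ≡ 4*(x-(2*e-g-g')) - 1 [ZMOD 8] :=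
    Int.modEq_iff_dvd.mpr ⟨r₄ - r₃, by linear_combination 4*hr₄ - 4*hr₃⟩
  have h3 : ((2*x-2*g)^2 + (2*(y-h)+1)^2) ≡ 4*(x-g) + 1 [ZMOD 8] :=
    Int.modEq_iff_dvd.mpr ⟨-(r₅ + r₆), by linear_combination (-4)*hr₅ - 4*hr₆⟩
  have h4 : ((2*x-2*g')^2 + (2*(y-h')+1)^2) ≡ 4*(x-g') + 1 [ZMOD 8] :=
    Int.modEq_iff_dvd.mpr ⟨-(r₇ + r₈), by linear_combination (-4)*hr₇ - 4*hr₈⟩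
  have hlast : (4*x-1) * (4*(x-(2*e-g-g'))-1) * (4*(x-g)+1) * (4*(x-g')+1) ≡ 1 [ZMOD 8] :=
    Int.modEq_iff_dvd.mpr ⟨g' - 2*g'^2 + g - 6*g*g' + 8*g*g'^2 - 2*g^2 + 8*g^2*g' - e + 4*e*g'
      + 4*e*g - 16*e*g*g' + 16*x*g*g' - 32*x*g*g'^2 - 32*x*g^2*g' - 4*x*e + 64*x*e*g*g' + 4*x^2
      - 16*x^2*g' + 32*x^2*g'^2 - 16*x^2*g + 32*x^2*g*g' + 32*x^2*g^2 + 16*x^2*e - 64*x^2*e*g'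
      - 64*x^2*e*g + 64*x^3*e - 32*x^4, by ring⟩
  have hfin := (((h1.mul h2).mul h3).mul h4).trans hlast
  simpa [Int.ModEq] using hfin


private lemma caseEE (a₀ a₁ a₂ a₃ b₀ b₁ b₂ b₃ x y : ℤ)
    (hx : a₀+a₂+b₀+b₂ = x + x) (hy : a₁+a₃+b₁+b₃ = y + y) :
    2^8 ∣ (((a₀+a₂)+(a₁+a₃)+(b₀+b₂)+(b₁+b₃)) *
        ((a₀+a₂)+(a₁+a₃)-(b₀+b₂)-(b₁+b₃)) *
        ((a₀+a₂)-(a₁+a₃)+(b₀+b₂)-(b₁+b₃)) *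
        ((a₀+a₂)-(a₁+a₃)-(b₀+b₂)+(b₁+b₃)) *
        (((a₀-a₂)+(b₀-b₂))^2 + ((a₁-a₃)+(b₁-b₃))^2) *
        (((a₀-a₂)-(b₀-b₂))^2 + ((a₁-a₃)-(b₁-b₃))^2)) := by
  obtain rfl : a₀ = x + x - a₂ - b₀ - b₂ := by omega
  obtain rfl : a₁ = y + y - a₃ - b₁ - b₃ := by omega
  have key := lemEE (b₀+b₂) (b₁+b₃) (a₂+b₂) (a₃+b₃) (a₂+b₀) (a₃+b₁) x y
  convert key using 2 <;> ring

private lemma caseOO (a₀ a₁ a₂ a₃ b₀ b₁ b₂ b₃ x y : ℤ)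
    (hx : a₀+a₂+b₀+b₂ = 2*x + 1) (hy : a₁+a₃+b₁+b₃ = 2*y + 1) :
    2^8 ∣ (((a₀+a₂)+(a₁+a₃)+(b₀+b₂)+(b₁+b₃)) *
        ((a₀+a₂)+(a₁+a₃)-(b₀+b₂)-(b₁+b₃)) *
        ((a₀+a₂)-(a₁+a₃)+(b₀+b₂)-(b₁+b₃)) *
        ((a₀+a₂)-(a₁+a₃)-(b₀+b₂)+(b₁+b₃)) *
        (((a₀-a₂)+(b₀-b₂))^2 + ((a₁-a₃)+(b₁-b₃))^2) *
        (((a₀-a₂)-(b₀-b₂))^2 + ((a₁-a₃)-(b₁-b₃))^2)) := by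
  obtain rfl : a₀ = 2*x + 1 - a₂ - b₀ - b₂ := by omega
  obtain rfl : a₁ = 2*y + 1 - a₃ - b₁ - b₃ := by omega
  have key := lemOO (b₀+b₂) (b₁+b₃) (a₂+b₂) (a₃+b₃) (a₂+b₀) (a₃+b₁) x y
  convert key using 2 <;> ring

private lemma caseEO (a₀ a₁ a₂ a₃ b₀ b₁ b₂ b₃ x y : ℤ)
    (hx : a₀+a₂+b₀+b₂ = x + x) (hy : a₁+a₃+b₁+b₃ = 2*y + 1) :
    (((a₀+a₂)+(a₁+a₃)+(b₀+b₂)+(b₁+b₃)) *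
        ((a₀+a₂)+(a₁+a₃)-(b₀+b₂)-(b₁+b₃)) *
        ((a₀+a₂)-(a₁+a₃)+(b₀+b₂)-(b₁+b₃)) *
        ((a₀+a₂)-(a₁+a₃)-(b₀+b₂)+(b₁+b₃)) *
        (((a₀-a₂)+(b₀-b₂))^2 + ((a₁-a₃)+(b₁-b₃))^2) *
        (((a₀-a₂)-(b₀-b₂))^2 + ((a₁-a₃)-(b₁-b₃))^2)) % 8 = 1 := by
  obtain rfl : a₀ = x + x - a₂ - b₀ - b₂ := by omega
  obtain rfl : a₁ = 2*y + 1 - a₃ - b₁ - b₃ := by omega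
  have key := lemEO (b₀+b₂) (b₁+b₃) (a₃+b₃) (a₃+b₁) (a₂+b₂) (a₂+b₀) (a₂+b₀+b₂) x y (by ring)
  convert key using 3 <;> ring

private lemma caseOE (a₀ a₁ a₂ a₃ b₀ b₁ b₂ b₃ x y : ℤ)
    (hx : a₀+a₂+b₀+b₂ = 2*x + 1) (hy : a₁+a₃+b₁+b₃ = y + y) :
    (((a₀+a₂)+(a₁+a₃)+(b₀+b₂)+(b₁+b₃)) *
        ((a₀+a₂)+(a₁+a₃)-(b₀+b₂)-(b₁+b₃)) *
        ((a₀+a₂)-(a₁+a₃)+(b₀+b₂)-(b₁+b₃)) *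
        ((a₀+a₂)-(a₁+a₃)-(b₀+b₂)+(b₁+b₃)) *
        (((a₀-a₂)+(b₀-b₂))^2 + ((a₁-a₃)+(b₁-b₃))^2) *
        (((a₀-a₂)-(b₀-b₂))^2 + ((a₁-a₃)-(b₁-b₃))^2)) % 8 = 1 := by
  obtain rfl : a₀ = 2*x + 1 - a₂ - b₀ - b₂ := by omega
  obtain rfl : a₁ = y + y - a₃ - b₁ - b₃ := by omega
  have key := lemEO (b₁+b₃) (b₀+b₂) (a₂+b₂) (a₂+b₀) (a₃+b₃) (a₃+b₁) (a₃+b₁+b₃) y x (by ring)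
  convert key using 3 <;> ring

theorem Z4xZ2_det_congruence (a₀ a₁ a₂ a₃ b₀ b₁ b₂ b₃ : ℤ) :
    ((Odd (((a₀+a₂)+(a₁+a₃)+(b₀+b₂)+(b₁+b₃)) *
        ((a₀+a₂)+(a₁+a₃)-(b₀+b₂)-(b₁+b₃)) *
        ((a₀+a₂)-(a₁+a₃)+(b₀+b₂)-(b₁+b₃)) *
        ((a₀+a₂)-(a₁+a₃)-(b₀+b₂)+(b₁+b₃)) *
        (((a₀-a₂)+(b₀-b₂))^2 + ((a₁-a₃)+(b₁-b₃))^2) *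
        (((a₀-a₂)-(b₀-b₂))^2 + ((a₁-a₃)-(b₁-b₃))^2)) →
      (((a₀+a₂)+(a₁+a₃)+(b₀+b₂)+(b₁+b₃)) *
        ((a₀+a₂)+(a₁+a₃)-(b₀+b₂)-(b₁+b₃)) *
        ((a₀+a₂)-(a₁+a₃)+(b₀+b₂)-(b₁+b₃)) *
        ((a₀+a₂)-(a₁+a₃)-(b₀+b₂)+(b₁+b₃)) *
        (((a₀-a₂)+(b₀-b₂))^2 + ((a₁-a₃)+(b₁-b₃))^2) *
        (((a₀-a₂)-(b₀-b₂))^2 + ((a₁-a₃)-(b₁-b₃))^2)) % 8 = 1) ∧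
     (Even (((a₀+a₂)+(a₁+a₃)+(b₀+b₂)+(b₁+b₃)) *
        ((a₀+a₂)+(a₁+a₃)-(b₀+b₂)-(b₁+b₃)) *
        ((a₀+a₂)-(a₁+a₃)+(b₀+b₂)-(b₁+b₃)) *
        ((a₀+a₂)-(a₁+a₃)-(b₀+b₂)+(b₁+b₃)) *
        (((a₀-a₂)+(b₀-b₂))^2 + ((a₁-a₃)+(b₁-b₃))^2) *
        (((a₀-a₂)-(b₀-b₂))^2 + ((a₁-a₃)-(b₁-b₃))^2)) →
      2^8 ∣ (((a₀+a₂)+(a₁+a₃)+(b₀+b₂)+(b₁+b₃)) *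
        ((a₀+a₂)+(a₁+a₃)-(b₀+b₂)-(b₁+b₃)) *
        ((a₀+a₂)-(a₁+a₃)+(b₀+b₂)-(b₁+b₃)) *
        ((a₀+a₂)-(a₁+a₃)-(b₀+b₂)+(b₁+b₃)) *
        (((a₀-a₂)+(b₀-b₂))^2 + ((a₁-a₃)+(b₁-b₃))^2) *
        (((a₀-a₂)-(b₀-b₂))^2 + ((a₁-a₃)-(b₁-b₃))^2)))) := by
  rcases Int.even_or_odd (a₀+a₂+b₀+b₂) with ⟨x,hx⟩|⟨x,hx⟩ <;>
    rcases Int.even_or_odd (a₁+a₃+b₁+b₃) with ⟨y,hy⟩|⟨y,hy⟩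
  · have key := caseEE a₀ a₁ a₂ a₃ b₀ b₁ b₂ b₃ x y hx hy
    generalize hD : (((a₀+a₂)+(a₁+a₃)+(b₀+b₂)+(b₁+b₃)) *
        ((a₀+a₂)+(a₁+a₃)-(b₀+b₂)-(b₁+b₃)) *
        ((a₀+a₂)-(a₁+a₃)+(b₀+b₂)-(b₁+b₃)) *
        ((a₀+a₂)-(a₁+a₃)-(b₀+b₂)+(b₁+b₃)) *
        (((a₀-a₂)+(b₀-b₂))^2 + ((a₁-a₃)+(b₁-b₃))^2) *
        (((a₀-a₂)-(b₀-b₂))^2 + ((a₁-a₃)-(b₁-b₃))^2)) = D at key ⊢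
    obtain ⟨w, hw⟩ := key
    exact ⟨fun ⟨k, hk⟩ => by omega, fun _ => ⟨w, hw⟩⟩
  · have key := caseEO a₀ a₁ a₂ a₃ b₀ b₁ b₂ b₃ x y hx hy
    generalize hD : (((a₀+a₂)+(a₁+a₃)+(b₀+b₂)+(b₁+b₃)) *
        ((a₀+a₂)+(a₁+a₃)-(b₀+b₂)-(b₁+b₃)) *
        ((a₀+a₂)-(a₁+a₃)+(b₀+b₂)-(b₁+b₃)) *
        ((a₀+a₂)-(a₁+a₃)-(b₀+b₂)+(b₁+b₃)) *
        (((a₀-a₂)+(b₀-b₂))^2 + ((a₁-a₃)+(b₁-b₃))^2) *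
        (((a₀-a₂)-(b₀-b₂))^2 + ((a₁-a₃)-(b₁-b₃))^2)) = D at key ⊢
    exact ⟨fun _ => key, fun ⟨k, hk⟩ => by omega⟩
  · have key := caseOE a₀ a₁ a₂ a₃ b₀ b₁ b₂ b₃ x y hx hy
    generalize hD : (((a₀+a₂)+(a₁+a₃)+(b₀+b₂)+(b₁+b₃)) *
        ((a₀+a₂)+(a₁+a₃)-(b₀+b₂)-(b₁+b₃)) *
        ((a₀+a₂)-(a₁+a₃)+(b₀+b₂)-(b₁+b₃)) *
        ((a₀+a₂)-(a₁+a₃)-(b₀+b₂)+(b₁+b₃)) *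
        (((a₀-a₂)+(b₀-b₂))^2 + ((a₁-a₃)+(b₁-b₃))^2) *
        (((a₀-a₂)-(b₀-b₂))^2 + ((a₁-a₃)-(b₁-b₃))^2)) = D at key ⊢
    exact ⟨fun _ => key, fun ⟨k, hk⟩ => by omega⟩
  · have key := caseOO a₀ a₁ a₂ a₃ b₀ b₁ b₂ b₃ x y hx hy
    generalize hD : (((a₀+a₂)+(a₁+a₃)+(b₀+b₂)+(b₁+b₃)) *
        ((a₀+a₂)+(a₁+a₃)-(b₀+b₂)-(b₁+b₃)) *
        ((a₀+a₂)-(a₁+a₃)+(b₀+b₂)-(b₁+b₃)) *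
        ((a₀+a₂)-(a₁+a₃)-(b₀+b₂)+(b₁+b₃)) *
        (((a₀-a₂)+(b₀-b₂))^2 + ((a₁-a₃)+(b₁-b₃))^2) *
        (((a₀-a₂)-(b₀-b₂))^2 + ((a₁-a₃)-(b₁-b₃))^2)) = D at key ⊢
    obtain ⟨w, hw⟩ := key
    exact ⟨fun ⟨k, hk⟩ => by omega, fun _ => ⟨w, hw⟩⟩
end

section
/- The set of Z₄×Z₂ group determinants over the integers equals {8m+1 : m ∈ ℤ} ∪ {2⁸m : m ∈ ℤ}. -/
/-!
Splitting `ℤ/4 × ℤ/2` along its `ℤ/2` factor turns the group matrix into a block matrix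
`[[A, B], [B, A]]` of two `ℤ/4`-circulants, whose determinant is `det (A + B) * det (A - B)`.
The determinant of the `ℤ/4`-circulant with first column `c` is the product of the values of
`∑ cⱼ xʲ` at the fourth roots of unity, `z4Det c`. Hence the group determinants are exactly the
products `z4Det s * z4Det t` with `s ≡ t [ZMOD 2]` pointwise. If `∑ sⱼ` is even, both factors
are divisible by `16`. If it is odd, then after a cyclic shift (which only changes signs)
`s₀ + s₂` is odd, whence `z4Det s ≡ 1 - 4 s₁ s₃` and `z4Det t ≡ 1 - 4 t₁ t₃ ≡ 1 - 4 s₁ s₃` modulo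
`8`, so the product is `≡ (1 - 4 s₁ s₃)² ≡ 1 [ZMOD 8]`. Explicit `s, t` realise every `8m + 1`
and `2⁸m`.
-/

open Matrix

section Circulant

def sumEquivProdZModTwo (G : Type*) : G ⊕ G ≃ G × ZMod 2 where
  toFun := Sum.elim (·, 0) (·, 1)
  invFun p := if p.2 = 0 then .inl p.1 else .inr p.1
  left_inv := by rintro (g | g) <;> simp
  right_inv := by rintro ⟨g, b⟩; fin_cases b <;> rfl

theorem submatrix_circulant_prod_zmodTwo {G α : Type*} [AddGroup G] (v : G × ZMod 2 → α) :
    (circulant v).submatrix (sumEquivProdZModTwo G) (sumEquivProdZModTwo G) =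
      fromBlocks (circulant fun g => v (g, 0)) (circulant fun g => v (g, 1))
        (circulant fun g => v (g, 1)) (circulant fun g => v (g, 0)) := by
  ext (g | g) (h | h) <;> simp [sumEquivProdZModTwo, circulant_apply]

variable {R : Type*} [CommRing R]

theorem det_fromBlocks_eq_det_add_mul_det_sub {n : Type*} [Fintype n] [DecidableEq n]
    (A B : Matrix n n R) :
    (fromBlocks A B B A).det = (A + B).det * (A - B).det := by
  have h : fromBlocks 1 1 0 1 * fromBlocks A B B A * fromBlocks 1 (-1) 0 1 =
      fromBlocks (A + B) 0 B (A - B) := by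
    simp only [fromBlocks_multiply]
    congr 1 <;> noncomm_ring
  simpa [det_mul, det_fromBlocks_zero₂₁, det_fromBlocks_zero₁₂] using congrArg det h

theorem det_circulant_prod_zmodTwo {G : Type*} [AddGroup G] [Fintype G] [DecidableEq G]
    (v : G × ZMod 2 → R) :
    (circulant v).det = (circulant fun g => v (g, 0) + v (g, 1)).det *
      (circulant fun g => v (g, 0) - v (g, 1)).det := by
  rw [← det_submatrix_equiv_self (sumEquivProdZModTwo G), submatrix_circulant_prod_zmodTwo,
    det_fromBlocks_eq_det_add_mul_det_sub, ← circulant_add, ← circulant_sub]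
  rfl

def z4Det (c : ZMod 4 → R) : R :=
  (c 0 + c 1 + c 2 + c 3) * (c 0 - c 1 + c 2 - c 3) * ((c 0 - c 2) ^ 2 + (c 1 - c 3) ^ 2)

theorem det_circulant_zmod_four (c : ZMod 4 → R) : (circulant c).det = z4Det c := by
  have : (circulant c).submatrix (ZMod.finEquiv 4).toEquiv (ZMod.finEquiv 4).toEquiv =
      !![c 0, c 3, c 2, c 1; c 1, c 0, c 3, c 2; c 2, c 1, c 0, c 3; c 3, c 2, c 1, c 0] := by
    ext i j
    fin_cases i <;> fin_cases j <;> rfl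
  rw [← det_submatrix_equiv_self (ZMod.finEquiv 4).toEquiv, this]
  simp [Fin.sum_univ_succ, det_succ_row_zero, Fin.succAbove, z4Det]
  ring

theorem z4Det_rotate (c : ZMod 4 → R) : z4Det (fun i => c (i + 1)) = -z4Det c := by
  have h1 : (0 + 1 : ZMod 4) = 1 := rfl
  have h2 : (1 + 1 : ZMod 4) = 2 := rfl
  have h3 : (2 + 1 : ZMod 4) = 3 := rfl
  have h0 : (3 + 1 : ZMod 4) = 0 := rfl
  simp only [z4Det, h0, h1, h2, h3]
  ring

end Circulant

theorem Int.sq_modEq_one_of_odd {n : ℤ} (hn : Odd n) : n ^ 2 ≡ 1 [ZMOD 8] := by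
  obtain ⟨k, rfl⟩ := hn
  obtain ⟨j, hj⟩ := Int.even_mul_succ_self k
  exact (Int.modEq_iff_add_fac.2 ⟨j, by linear_combination 4 * hj⟩).symm

theorem z4Det_modEq_of_odd_of_even {c : ZMod 4 → ℤ} (h02 : Odd (c 0 + c 2))
    (h13 : Even (c 1 + c 3)) : z4Det c ≡ 1 - 4 * (c 1 * c 3) [ZMOD 8] := by
  have h0m2 : Odd (c 0 - c 2) := by simp only [Int.odd_iff] at *; omega
  have h1m3 : Even (c 1 - c 3) := by simp only [Int.even_iff] at *; omega
  have h16 : (2 : ℤ) ^ 2 * 2 ^ 2 ∣ (c 1 + c 3) ^ 2 * (c 1 - c 3) ^ 2 :=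
    mul_dvd_mul (pow_dvd_pow_of_dvd h13.two_dvd 2) (pow_dvd_pow_of_dvd h1m3.two_dvd 2)
  have h8 : (8 : ℤ) ∣ (c 1 + c 3) ^ 2 * (c 1 - c 3) ^ 2 := (by norm_num : (8 : ℤ) ∣ 16).trans h16
  calc z4Det c = ((c 0 + c 2) ^ 2 - (c 1 + c 3) ^ 2) * ((c 0 - c 2) ^ 2 + (c 1 - c 3) ^ 2) := by
        unfold z4Det; ring
    _ ≡ (1 - (c 1 + c 3) ^ 2) * (1 + (c 1 - c 3) ^ 2) [ZMOD 8] := by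
        gcongr
        · exact Int.sq_modEq_one_of_odd h02
        · exact Int.sq_modEq_one_of_odd h0m2
    _ = 1 - 4 * (c 1 * c 3) - (c 1 + c 3) ^ 2 * (c 1 - c 3) ^ 2 := by ring
    _ ≡ 1 - 4 * (c 1 * c 3) [ZMOD 8] := by
        simpa using (Int.ModEq.refl _).sub (Int.modEq_zero_iff_dvd.2 h8)

theorem z4Det_mul_modEq_one_of_odd_of_even {s t : ZMod 4 → ℤ} (hst : ∀ i, s i ≡ t i [ZMOD 2])
    (h02 : Odd (s 0 + s 2)) (h13 : Even (s 1 + s 3)) : z4Det s * z4Det t ≡ 1 [ZMOD 8] := by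
  have ht02 : Odd (t 0 + t 2) := by
    have := hst 0; have := hst 2; simp only [Int.ModEq, Int.odd_iff] at *; omega
  have ht13 : Even (t 1 + t 3) := by
    have := hst 1; have := hst 3; simp only [Int.ModEq, Int.even_iff] at *; omega
  have h4 : 4 * (t 1 * t 3) ≡ 4 * (s 1 * s 3) [ZMOD 8] := ((hst 1).mul (hst 3)).symm.mul_left'
  calc z4Det s * z4Det t ≡ (1 - 4 * (s 1 * s 3)) * (1 - 4 * (t 1 * t 3)) [ZMOD 8] :=
        (z4Det_modEq_of_odd_of_even h02 h13).mul (z4Det_modEq_of_odd_of_even ht02 ht13)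
    _ ≡ (1 - 4 * (s 1 * s 3)) * (1 - 4 * (s 1 * s 3)) [ZMOD 8] :=
        (Int.ModEq.refl _).mul ((Int.ModEq.refl 1).sub h4)
    _ = 1 + 8 * (2 * (s 1 * s 3) ^ 2 - s 1 * s 3) := by ring
    _ ≡ 1 [ZMOD 8] := Int.modEq_add_fac_self

theorem z4Det_mul_modEq_one {s t : ZMod 4 → ℤ} (hst : ∀ i, s i ≡ t i [ZMOD 2])
    (hs : Odd (s 0 + s 1 + s 2 + s 3)) : z4Det s * z4Det t ≡ 1 [ZMOD 8] := by
  rcases Int.even_or_odd (s 0 + s 2) with h02 | h02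
  · have h13 : Odd (s 1 + s 3) := by simp only [Int.odd_iff, Int.even_iff] at *; omega
    have := z4Det_mul_modEq_one_of_odd_of_even (s := fun i => s (i + 1)) (t := fun i => t (i + 1))
      (fun i => hst (i + 1)) h13 (by rwa [add_comm] at h02)
    rwa [z4Det_rotate, z4Det_rotate, neg_mul_neg] at this
  · exact z4Det_mul_modEq_one_of_odd_of_even hst h02
      (by simp only [Int.odd_iff, Int.even_iff] at *; omega)

theorem sixteen_dvd_z4Det {c : ZMod 4 → ℤ} (hc : Even (c 0 + c 1 + c 2 + c 3)) :
    16 ∣ z4Det c := by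
  have hdet : z4Det c =
      ((c 0 + c 2) ^ 2 - (c 1 + c 3) ^ 2) * ((c 0 - c 2) ^ 2 + (c 1 - c 3) ^ 2) := by
    unfold z4Det; ring
  rw [hdet]
  rcases Int.even_or_odd (c 0 + c 2) with h02 | h02
  · have h13 : Even (c 1 + c 3) := by simp only [Int.even_iff] at *; omega
    have h0m2 : Even (c 0 - c 2) := by simp only [Int.even_iff] at *; omega
    have h1m3 : Even (c 1 - c 3) := by simp only [Int.even_iff] at *; omega
    have sq : ∀ {x : ℤ}, Even x → 4 ∣ x ^ 2 := fun hx => by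
      simpa using pow_dvd_pow_of_dvd hx.two_dvd 2
    exact mul_dvd_mul (dvd_sub (sq h02) (sq h13)) (dvd_add (sq h0m2) (sq h1m3))
  · have h13 : Odd (c 1 + c 3) := by simp only [Int.odd_iff, Int.even_iff] at *; omega
    have h0m2 : Odd (c 0 - c 2) := by simp only [Int.odd_iff] at *; omega
    have h1m3 : Odd (c 1 - c 3) := by simp only [Int.odd_iff] at *; omega
    have h8 : (8 : ℤ) ∣ (c 0 + c 2) ^ 2 - (c 1 + c 3) ^ 2 :=
      ((Int.sq_modEq_one_of_odd h13).trans (Int.sq_modEq_one_of_odd h02).symm).dvd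
    exact mul_dvd_mul h8 ((h0m2.pow.add_odd h1m3.pow).two_dvd)

theorem z4Det_mul_eq_of_modEq {s t : ZMod 4 → ℤ} (hst : ∀ i, s i ≡ t i [ZMOD 2]) :
    (∃ m : ℤ, z4Det s * z4Det t = 8 * m + 1) ∨ (∃ m : ℤ, z4Det s * z4Det t = 2 ^ 8 * m) := by
  rcases Int.even_or_odd (s 0 + s 1 + s 2 + s 3) with hs | hs
  · have ht : Even (t 0 + t 1 + t 2 + t 3) := by
      have := hst 0; have := hst 1; have := hst 2; have := hst 3
      simp only [Int.ModEq, Int.even_iff] at *; omega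
    obtain ⟨a, ha⟩ := sixteen_dvd_z4Det hs
    obtain ⟨b, hb⟩ := sixteen_dvd_z4Det ht
    exact .inr ⟨a * b, by rw [ha, hb]; ring⟩
  · obtain ⟨m, hm⟩ := Int.modEq_iff_add_fac.1 (z4Det_mul_modEq_one hst hs).symm
    exact .inl ⟨m, by rw [hm]; ring⟩

theorem exists_det_circulant_eq_iff (d : ℤ) :
    (∃ v : ZMod 4 × ZMod 2 → ℤ, (circulant v).det = d) ↔
      ∃ s t : ZMod 4 → ℤ, (∀ i, s i ≡ t i [ZMOD 2]) ∧ z4Det s * z4Det t = d := by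
  simp only [det_circulant_prod_zmodTwo, det_circulant_zmod_four]
  constructor
  · rintro ⟨v, rfl⟩
    exact ⟨_, _, fun i => Int.modEq_iff_add_fac.2 ⟨-v (i, 1), by ring⟩, rfl⟩
  · rintro ⟨s, t, hst, rfl⟩
    refine ⟨fun p => if p.2 = 0 then (s p.1 + t p.1) / 2 else (s p.1 - t p.1) / 2, ?_⟩
    congr 2 <;> funext i <;> have := hst i <;> unfold Int.ModEq at this
    · show (s i + t i) / 2 + (s i - t i) / 2 = s i
      omega
    · show (s i + t i) / 2 - (s i - t i) / 2 = t i
      omega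

theorem Z4xZ2_det_values (d : ℤ) :
    (∃ v : ZMod 4 × ZMod 2 → ℤ,
      (Matrix.of fun g h : ZMod 4 × ZMod 2 => v (g - h)).det = d) ↔
    ((∃ m : ℤ, d = 8*m+1) ∨ (∃ m : ℤ, d = 2^8 * m)) := by
  change (∃ v : ZMod 4 × ZMod 2 → ℤ, (circulant v).det = d) ↔ _
  rw [exists_det_circulant_eq_iff]
  constructor
  · rintro ⟨s, t, hst, rfl⟩
    exact z4Det_mul_eq_of_modEq hst
  · rintro (⟨m, rfl⟩ | ⟨m, rfl⟩)
    · refine ⟨![2 * m + 1, 2 * m, 2 * m, 2 * m], ![1, 0, 0, 0], ?_, by simp [z4Det]; ring⟩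
      intro i; fin_cases i <;> simp [Int.ModEq]
    -- z4Det ![m + 1, m, m, m - 1] = 16 * m, and a t with z4Det t = 16 exists in each parity class
    · obtain ⟨k, rfl | rfl⟩ := Int.even_or_odd' m
      · refine ⟨![2 * k + 1, 2 * k, 2 * k, 2 * k - 1], ![1, 0, 2, 1], ?_, by simp [z4Det]; ring⟩
        intro i; fin_cases i <;> simp [Int.ModEq]
      · refine ⟨![2 * k + 2, 2 * k + 1, 2 * k + 1, 2 * k], ![2, 1, 1, 0], ?_, by simp [z4Det]; ring⟩
        intro i; fin_cases i <;> simp [Int.ModEq]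
end

section
/- Let F(x,y,z) = ∑_{i,j,k∈{0,1}} a(i,j,k) xⁱyʲzᵏ with integer coefficients and M = ∏_{x,y,z∈{±1}} F(x,y,z). If M is even then 2⁸ divides M, and if moreover M/2⁸ is even then 2¹² divides M. -/
private lemma pairdvd {x y : ℤ} (h : 2 ∣ x ∨ 2 ∣ y) : 2 ∣ x * y :=
  h.elim (fun h => h.mul_right y) (fun h => h.mul_left x)

private lemma assemble {p q r s t u v w : ℤ} (d1 : 2 ∣ p*q) (d2 : 2 ∣ r*s)
    (d3 : 2 ∣ t*u) (d4 : 2 ∣ v*w) : (2:ℤ)^4 ∣ p*q*r*s*t*u*v*w := by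
  obtain ⟨x1, e1⟩ := d1; obtain ⟨x2, e2⟩ := d2; obtain ⟨x3, e3⟩ := d3; obtain ⟨x4, e4⟩ := d4
  exact ⟨x1*x2*x3*x4, by
    rw [show p*q*r*s*t*u*v*w = (p*q)*((r*s)*((t*u)*(v*w))) from by ring, e1, e2, e3, e4]; ring⟩

private lemma oddpair0 {x y : ℤ} (h : ¬ 2 ∣ (x + y)) : 2 ∣ x ∨ 2 ∣ y := by omega

private lemma oddpair {x y s : ℤ} (h : 2 ∣ (x + y) - s) (hs : ¬ 2 ∣ s) : 2 ∣ x ∨ 2 ∣ y := by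
  omega

private lemma samepar {g1 g2 g3 g4 g5 g6 g7 g8 : ℤ}
    (hz : 2 ∣ g1 + g2) (hy : 2 ∣ g1 + g3) (hx : 2 ∣ g1 + g5)
    (p34 : 2 ∣ (g3 + g4) - (g1 + g2)) (p56 : 2 ∣ (g5 + g6) - (g1 + g2))
    (p78 : 2 ∣ (g7 + g8) - (g1 + g2)) (p57 : 2 ∣ (g5 + g7) - (g1 + g3))
    (h : 2 ∣ g1 ∨ 2 ∣ g2 ∨ 2 ∣ g3 ∨ 2 ∣ g4 ∨ 2 ∣ g5 ∨ 2 ∣ g6 ∨ 2 ∣ g7 ∨ 2 ∣ g8) :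
    2 ∣ g1 ∧ 2 ∣ g3 ∧ 2 ∣ g5 ∧ 2 ∣ g7 := by omega

private lemma key (A B C D E F G H M : ℤ)
    (hK : M = ((A - B - C - D + E + F + G - H) * (A - B - C + D + E - F - G + H) *
        ((A - B + C - D - E + F - G + H) * (A - B + C + D - E - F + G - H))) *
        ((A + B - C - D - E - F + G + H) * (A + B - C + D - E + F - G - H) *
        ((A + B + C - D + E - F - G - H) * (A + B + C + D + E + F + G + H)))) :
    (Even M → 2^8 ∣ M) ∧ (Even M → Even (M / 2^8) → 2^12 ∣ M) := by
  have main : Even M → ∃ g1 g2 g3 g4 g5 g6 g7 g8 : ℤ,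
      A - B - C - D + E + F + G - H = 2*g1 ∧ A - B - C + D + E - F - G + H = 2*g2 ∧
      A - B + C - D - E + F - G + H = 2*g3 ∧ A - B + C + D - E - F + G - H = 2*g4 ∧
      A + B - C - D - E - F + G + H = 2*g5 ∧ A + B - C + D - E + F - G - H = 2*g6 ∧
      A + B + C - D + E - F - G - H = 2*g7 ∧ A + B + C + D + E + F + G + H = 2*g8 ∧
      M = 2^8 * (g1*g2*g3*g4*g5*g6*g7*g8) := by
    intro hEv
    have hs : (2:ℤ) ∣ A + B + C + D + E + F + G + H := by
      rw [hK] at hEv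
      simp only [Int.even_mul] at hEv
      rcases hEv with ((h | h) | (h | h)) | ((h | h) | (h | h)) <;> obtain ⟨t, ht⟩ := h
      · exact ⟨t + (B + C + D + H), by linear_combination ht⟩
      · exact ⟨t + (B + C + F + G), by linear_combination ht⟩
      · exact ⟨t + (B + D + E + G), by linear_combination ht⟩
      · exact ⟨t + (B + E + F + H), by linear_combination ht⟩
      · exact ⟨t + (C + D + E + F), by linear_combination ht⟩
      · exact ⟨t + (C + E + G + H), by linear_combination ht⟩
      · exact ⟨t + (D + F + G + H), by linear_combination ht⟩
      · exact ⟨t, by linear_combination ht⟩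
    obtain ⟨s8, hs8⟩ := hs
    obtain ⟨g1, hg1⟩ : (2:ℤ) ∣ A - B - C - D + E + F + G - H :=
      ⟨s8 - (B + C + D + H), by linear_combination hs8⟩
    obtain ⟨g2, hg2⟩ : (2:ℤ) ∣ A - B - C + D + E - F - G + H :=
      ⟨s8 - (B + C + F + G), by linear_combination hs8⟩
    obtain ⟨g3, hg3⟩ : (2:ℤ) ∣ A - B + C - D - E + F - G + H :=
      ⟨s8 - (B + D + E + G), by linear_combination hs8⟩
    obtain ⟨g4, hg4⟩ : (2:ℤ) ∣ A - B + C + D - E - F + G - H :=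
      ⟨s8 - (B + E + F + H), by linear_combination hs8⟩
    obtain ⟨g5, hg5⟩ : (2:ℤ) ∣ A + B - C - D - E - F + G + H :=
      ⟨s8 - (C + D + E + F), by linear_combination hs8⟩
    obtain ⟨g6, hg6⟩ : (2:ℤ) ∣ A + B - C + D - E + F - G - H :=
      ⟨s8 - (C + E + G + H), by linear_combination hs8⟩
    obtain ⟨g7, hg7⟩ : (2:ℤ) ∣ A + B + C - D + E - F - G - H :=
      ⟨s8 - (D + F + G + H), by linear_combination hs8⟩
    obtain ⟨g8, hg8⟩ : (2:ℤ) ∣ A + B + C + D + E + F + G + H := ⟨s8, hs8⟩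
    refine ⟨g1, g2, g3, g4, g5, g6, g7, g8, hg1, hg2, hg3, hg4, hg5, hg6, hg7, hg8, ?_⟩
    rw [hK, hg1, hg2, hg3, hg4, hg5, hg6, hg7, hg8]; ring
  constructor
  · intro hEv
    obtain ⟨g1, g2, g3, g4, g5, g6, g7, g8, _, _, _, _, _, _, _, _, hM8⟩ := main hEv
    exact ⟨g1*g2*g3*g4*g5*g6*g7*g8, hM8⟩
  · intro hEv hEv2
    obtain ⟨g1, g2, g3, g4, g5, g6, g7, g8, hg1, hg2, hg3, hg4, hg5, hg6, hg7, hg8, hM8⟩ :=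
      main hEv
    have hdiv : M / 2^8 = g1*g2*g3*g4*g5*g6*g7*g8 := by
      rw [hM8]; exact Int.mul_ediv_cancel_left _ (by norm_num)
    rw [hdiv] at hEv2
    clear hdiv hEv main hK
    -- pair-sum parity relations (z pairs, y pairs, x pairs)
    have p34 : (2:ℤ) ∣ (g3 + g4) - (g1 + g2) := ⟨C - E, by linarith⟩
    have p56 : (2:ℤ) ∣ (g5 + g6) - (g1 + g2) := ⟨B - E, by linarith⟩
    have p78 : (2:ℤ) ∣ (g7 + g8) - (g1 + g2) := ⟨B + C, by linarith⟩
    have p24 : (2:ℤ) ∣ (g2 + g4) - (g1 + g3) := ⟨D - F, by linarith⟩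
    have p57 : (2:ℤ) ∣ (g5 + g7) - (g1 + g3) := ⟨B - F, by linarith⟩
    have p68 : (2:ℤ) ∣ (g6 + g8) - (g1 + g3) := ⟨B + D, by linarith⟩
    have p26 : (2:ℤ) ∣ (g2 + g6) - (g1 + g5) := ⟨D - G, by linarith⟩
    have p37 : (2:ℤ) ∣ (g3 + g7) - (g1 + g5) := ⟨C - G, by linarith⟩
    have p48 : (2:ℤ) ∣ (g4 + g8) - (g1 + g5) := ⟨C + D, by linarith⟩
    clear hg1 hg2 hg3 hg4 hg5 hg6 hg7 hg8
    clear A B C D E F G H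
    suffices h : (2:ℤ)^4 ∣ g1*g2*g3*g4*g5*g6*g7*g8 by
      obtain ⟨Q, hQ⟩ := h
      exact ⟨Q, by rw [hM8, hQ]; ring⟩
    by_cases hz : (2:ℤ) ∣ g1 + g2
    · by_cases hy : (2:ℤ) ∣ g1 + g3
      · by_cases hx : (2:ℤ) ∣ g1 + g5
        · -- all pair sums even: all gᵢ share a parity, and one is even
          have hd : (2:ℤ) ∣ g1 ∨ 2 ∣ g2 ∨ 2 ∣ g3 ∨ 2 ∣ g4 ∨
              2 ∣ g5 ∨ 2 ∣ g6 ∨ 2 ∣ g7 ∨ 2 ∣ g8 := by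
            simp only [Int.even_mul] at hEv2
            rcases hEv2 with ((((((h | h) | h) | h) | h) | h) | h) | h
            · exact Or.inl h.two_dvd
            · exact Or.inr (Or.inl h.two_dvd)
            · exact Or.inr (Or.inr (Or.inl h.two_dvd))
            · exact Or.inr (Or.inr (Or.inr (Or.inl h.two_dvd)))
            · exact Or.inr (Or.inr (Or.inr (Or.inr (Or.inl h.two_dvd))))
            · exact Or.inr (Or.inr (Or.inr (Or.inr (Or.inr (Or.inl h.two_dvd)))))
            · exact Or.inr (Or.inr (Or.inr (Or.inr (Or.inr (Or.inr (Or.inl h.two_dvd))))))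
            · exact Or.inr (Or.inr (Or.inr (Or.inr (Or.inr (Or.inr (Or.inr h.two_dvd))))))
          obtain ⟨e1, e3, e5, e7⟩ := samepar hz hy hx p34 p56 p78 p57 hd
          exact assemble (pairdvd (Or.inl e1)) (pairdvd (Or.inl e3))
            (pairdvd (Or.inl e5)) (pairdvd (Or.inl e7))
        · -- x-direction pair sums odd: pairs (g1,g5),(g2,g6),(g3,g7),(g4,g8)
          exact dvd_trans
            (assemble (pairdvd (oddpair0 hx)) (pairdvd (oddpair p26 hx))
              (pairdvd (oddpair p37 hx)) (pairdvd (oddpair p48 hx)))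
            (dvd_of_eq (by ring))
      · -- y-direction pair sums odd: pairs (g1,g3),(g2,g4),(g5,g7),(g6,g8)
        exact dvd_trans
          (assemble (pairdvd (oddpair0 hy)) (pairdvd (oddpair p24 hy))
            (pairdvd (oddpair p57 hy)) (pairdvd (oddpair p68 hy)))
          (dvd_of_eq (by ring))
    · -- z-direction pair sums odd: pairs (g1,g2),(g3,g4),(g5,g6),(g7,g8)
      exact assemble (pairdvd (oddpair0 hz)) (pairdvd (oddpair p34 hz))
        (pairdvd (oddpair p56 hz)) (pairdvd (oddpair p78 hz))

theorem Z2cubed_even_measure_divisibility (a : Fin 2 → Fin 2 → Fin 2 → ℤ) (M : ℤ)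
    (hM : M = ∏ x ∈ ({-1, 1} : Finset ℤ), ∏ y ∈ ({-1, 1} : Finset ℤ),
        ∏ z ∈ ({-1, 1} : Finset ℤ),
        ∑ i : Fin 2, ∑ j : Fin 2, ∑ k : Fin 2,
          a i j k * x ^ (i : ℕ) * y ^ (j : ℕ) * z ^ (k : ℕ)) :
    (Even M → 2^8 ∣ M) ∧ (Even M → Even (M / 2^8) → 2^12 ∣ M) := by
  refine key (a 0 0 0) (a 1 0 0) (a 0 1 0) (a 0 0 1) (a 1 1 0) (a 1 0 1) (a 0 1 1) (a 1 1 1) M ?_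
  simp only [Finset.prod_pair (show (-1:ℤ) ≠ 1 by norm_num), Fin.sum_univ_two,
    Fin.val_zero, Fin.val_one, pow_zero, pow_one] at hM
  rw [hM]
  congr 1 <;> congr 1 <;> congr 1 <;> ring
end

section
/- Let F(x,y) = ∑_{i,j=0}^{2} a(i,j) xⁱyʲ with integer coefficients and M = ∏_{i,j=0}^{2} F(ωⁱ,ωʲ) where ω = e^{2πi/3}. If 3 divides M, then 3⁶ divides M. -/
private lemma norm9 (X Y : ℤ) (hx : 3 ∣ X) (hy : 3 ∣ Y) : (9:ℤ) ∣ X^2 - X*Y + Y^2 := by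
  obtain ⟨x, rfl⟩ := hx
  obtain ⟨y, rfl⟩ := hy
  exact ⟨x^2 - x*y + y^2, by ring⟩

private lemma final_dvd (m S N1 N2 N3 N4 : ℤ) (hm : m = S*N1*N2*N3*N4) (hS : 3 ∣ S)
    (h1 : 3 ∣ N1) (h2 : 3 ∣ N2) (h3 : 3 ∣ N3) (h4 : 9 ∣ N4) : (3^6:ℤ) ∣ m := by
  obtain ⟨s, rfl⟩ := hS
  obtain ⟨n1, rfl⟩ := h1
  obtain ⟨n2, rfl⟩ := h2
  obtain ⟨n3, rfl⟩ := h3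
  obtain ⟨n4, rfl⟩ := h4
  exact ⟨s*n1*n2*n3*n4, by rw [hm]; ring⟩

set_option maxHeartbeats 3200000 in
theorem Z3xZ3_three_dvd_imp (a : Fin 3 → Fin 3 → ℤ) (m : ℤ)
    (hm : (m : ℂ) = ∏ i : Fin 3, ∏ j : Fin 3,
        ∑ s : Fin 3, ∑ t : Fin 3,
          (a s t : ℂ) * ((Complex.exp (2 * Real.pi * Complex.I / 3)) ^ (i : ℕ)) ^ (s : ℕ) *
            ((Complex.exp (2 * Real.pi * Complex.I / 3)) ^ (j : ℕ)) ^ (t : ℕ))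
    (h3 : (3 : ℤ) ∣ m) : (3^6 : ℤ) ∣ m := by
  set ω : ℂ := Complex.exp (2 * Real.pi * Complex.I / 3) with hw
  have hprim : IsPrimitiveRoot ω 3 := by
    have h := Complex.isPrimitiveRoot_exp 3 (by norm_num)
    norm_num at h
    exact h
  have hω3 : ω ^ 3 = 1 := hprim.pow_eq_one
  have hne : ω ≠ 1 := hprim.ne_one (by norm_num)
  have hquad : ω^2 + ω + 1 = 0 := by
    have h : (ω - 1) * (ω^2 + ω + 1) = 0 := by linear_combination hω3
    rcases mul_eq_zero.mp h with h1 | h1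
    · exact absurd (sub_eq_zero.mp h1) hne
    · exact h1
  set S : ℤ := a 0 0 + a 0 1 + a 0 2 + a 1 0 + a 1 1 + a 1 2 + a 2 0 + a 2 1 + a 2 2 with hS
  set Xr : ℤ := (a 0 0 + a 0 1 + a 0 2) - (a 2 0 + a 2 1 + a 2 2) with hXr
  set Yr : ℤ := (a 1 0 + a 1 1 + a 1 2) - (a 2 0 + a 2 1 + a 2 2) with hYr
  set Xc : ℤ := (a 0 0 + a 1 0 + a 2 0) - (a 0 2 + a 1 2 + a 2 2) with hXc
  set Yc : ℤ := (a 0 1 + a 1 1 + a 2 1) - (a 0 2 + a 1 2 + a 2 2) with hYc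
  set Xd : ℤ := (a 0 0 + a 1 2 + a 2 1) - (a 0 2 + a 1 1 + a 2 0) with hXd
  set Yd : ℤ := (a 0 1 + a 1 0 + a 2 2) - (a 0 2 + a 1 1 + a 2 0) with hYd
  set Xf : ℤ := (a 0 0 + a 1 1 + a 2 2) - (a 2 0 + a 0 1 + a 1 2) with hXf
  set Yf : ℤ := (a 1 0 + a 2 1 + a 0 2) - (a 2 0 + a 0 1 + a 1 2) with hYf
  set Nr : ℤ := Xr^2 - Xr*Yr + Yr^2 with hNr
  set Nc : ℤ := Xc^2 - Xc*Yc + Yc^2 with hNc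
  set Nd : ℤ := Xd^2 - Xd*Yd + Yd^2 with hNd
  set Nf : ℤ := Xf^2 - Xf*Yf + Yf^2 with hNf
  clear_value S Xr Yr Xc Yc Xd Yd Xf Yf Nr Nc Nd Nf
  have hm2 : (m:ℂ) = ((S:ℂ) * ((Xc:ℂ) + (Yc:ℂ)*ω) * ((Xc:ℂ) - (Yc:ℂ) - (Yc:ℂ)*ω) *
      (((Xr:ℂ) + (Yr:ℂ)*ω) * ((Xd:ℂ) + (Yd:ℂ)*ω) * ((Xf:ℂ) + (Yf:ℂ)*ω))) *
      (((Xr:ℂ) - (Yr:ℂ) - (Yr:ℂ)*ω) * ((Xf:ℂ) - (Yf:ℂ) - (Yf:ℂ)*ω) *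
        ((Xd:ℂ) - (Yd:ℂ) - (Yd:ℂ)*ω)) := by
    rw [hm]
    simp only [Fin.prod_univ_three]
    congr 1
    · congr 1
      · congr 1
        · congr 1
          · -- F00
            simp only [Fin.sum_univ_three, Fin.val_zero, Fin.val_one, Fin.val_two,
              pow_zero, pow_one, one_pow, mul_one, one_mul]
            rw [hS]; push_cast; ring
          · -- F01
            simp only [Fin.sum_univ_three, Fin.val_zero, Fin.val_one, Fin.val_two,
              pow_zero, pow_one, one_pow, mul_one, one_mul]
            rw [hXc, hYc]; push_cast
            linear_combination ((a 0 2 : ℂ) + (a 1 2 : ℂ) + (a 2 2 : ℂ)) * hquad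
        · -- F02
          simp only [Fin.sum_univ_three, Fin.val_zero, Fin.val_one, Fin.val_two,
            pow_zero, pow_one, one_pow, mul_one, one_mul]
          rw [hXc, hYc]; push_cast
          linear_combination ((a 0 1 : ℂ) + (a 1 1 : ℂ) + (a 2 1 : ℂ)) * hquad +
            ((a 0 2 : ℂ) + (a 1 2 : ℂ) + (a 2 2 : ℂ)) * ω * hω3
      · congr 1
        · congr 1
          · -- F10
            simp only [Fin.sum_univ_three, Fin.val_zero, Fin.val_one, Fin.val_two,
              pow_zero, pow_one, one_pow, mul_one, one_mul]
            rw [hXr, hYr]; push_cast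
            linear_combination ((a 2 0 : ℂ) + (a 2 1 : ℂ) + (a 2 2 : ℂ)) * hquad
          · -- F11
            simp only [Fin.sum_univ_three, Fin.val_zero, Fin.val_one, Fin.val_two,
              pow_zero, pow_one, one_pow, mul_one, one_mul]
            rw [hXd, hYd]; push_cast
            linear_combination ((a 0 2 : ℂ) + (a 1 1 : ℂ) + (a 2 0 : ℂ)) * hquad +
              ((a 1 2 : ℂ) + (a 2 1 : ℂ) + (a 2 2 : ℂ) * ω) * hω3
        · -- F12
          simp only [Fin.sum_univ_three, Fin.val_zero, Fin.val_one, Fin.val_two,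
            pow_zero, pow_one, one_pow, mul_one, one_mul]
          rw [hXf, hYf]; push_cast
          linear_combination ((a 0 1 : ℂ) + (a 2 0 : ℂ) + (a 1 2 : ℂ)) * hquad +
            ((a 1 1 : ℂ) + ((a 0 2 : ℂ) + (a 2 1 : ℂ)) * ω + (a 1 2 : ℂ) * ω^2 +
              (a 2 2 : ℂ) * (ω^3 + 1)) * hω3
    · congr 1
      · congr 1
        · -- F20
          simp only [Fin.sum_univ_three, Fin.val_zero, Fin.val_one, Fin.val_two,
            pow_zero, pow_one, one_pow, mul_one, one_mul]
          rw [hXr, hYr]; push_cast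
          linear_combination ((a 1 0 : ℂ) + (a 1 1 : ℂ) + (a 1 2 : ℂ)) * hquad +
            ((a 2 0 : ℂ) + (a 2 1 : ℂ) + (a 2 2 : ℂ)) * ω * hω3
        · -- F21
          simp only [Fin.sum_univ_three, Fin.val_zero, Fin.val_one, Fin.val_two,
            pow_zero, pow_one, one_pow, mul_one, one_mul]
          rw [hXf, hYf]; push_cast
          linear_combination ((a 0 2 : ℂ) + (a 1 0 : ℂ) + (a 2 1 : ℂ)) * hquad +
            ((a 1 1 : ℂ) + ((a 1 2 : ℂ) + (a 2 0 : ℂ)) * ω + (a 2 1 : ℂ) * ω^2 +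
              (a 2 2 : ℂ) * (ω^3 + 1)) * hω3
      · -- F22
        simp only [Fin.sum_univ_three, Fin.val_zero, Fin.val_one, Fin.val_two,
          pow_zero, pow_one, one_pow, mul_one, one_mul]
        rw [hXd, hYd]; push_cast
        linear_combination ((a 0 1 : ℂ) + (a 1 0 : ℂ) + (a 2 2 : ℂ)) * hquad +
          (((a 0 2 : ℂ) + (a 1 1 : ℂ) + (a 2 0 : ℂ)) * ω +
            ((a 1 2 : ℂ) + (a 2 1 : ℂ)) * (ω^3 + 1) +
            (a 2 2 : ℂ) * ω^2 * (ω^3 + 1)) * hω3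
  clear hm hprim hne
  -- pair products
  have pc : ((Xc:ℂ) + (Yc:ℂ)*ω) * ((Xc:ℂ) - (Yc:ℂ) - (Yc:ℂ)*ω) = ((Nc : ℤ) : ℂ) := by
    rw [hNc]; push_cast; linear_combination (-(Yc:ℂ)^2) * hquad
  have pr : ((Xr:ℂ) + (Yr:ℂ)*ω) * ((Xr:ℂ) - (Yr:ℂ) - (Yr:ℂ)*ω) = ((Nr : ℤ) : ℂ) := by
    rw [hNr]; push_cast; linear_combination (-(Yr:ℂ)^2) * hquad
  have pd : ((Xd:ℂ) + (Yd:ℂ)*ω) * ((Xd:ℂ) - (Yd:ℂ) - (Yd:ℂ)*ω) = ((Nd : ℤ) : ℂ) := by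
    rw [hNd]; push_cast; linear_combination (-(Yd:ℂ)^2) * hquad
  have pf : ((Xf:ℂ) + (Yf:ℂ)*ω) * ((Xf:ℂ) - (Yf:ℂ) - (Yf:ℂ)*ω) = ((Nf : ℤ) : ℂ) := by
    rw [hNf]; push_cast; linear_combination (-(Yf:ℂ)^2) * hquad
  have hm3 : (m:ℂ) = (S:ℂ) *
      (((Xc:ℂ) + (Yc:ℂ)*ω) * ((Xc:ℂ) - (Yc:ℂ) - (Yc:ℂ)*ω)) *
      (((Xr:ℂ) + (Yr:ℂ)*ω) * ((Xr:ℂ) - (Yr:ℂ) - (Yr:ℂ)*ω)) *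
      (((Xd:ℂ) + (Yd:ℂ)*ω) * ((Xd:ℂ) - (Yd:ℂ) - (Yd:ℂ)*ω)) *
      (((Xf:ℂ) + (Yf:ℂ)*ω) * ((Xf:ℂ) - (Yf:ℂ) - (Yf:ℂ)*ω)) := by
    rw [hm2]; ring
  rw [pc, pr, pd, pf] at hm3
  have hmz : m = S * Nc * Nr * Nd * Nf := by exact_mod_cast hm3
  clear hm2 hm3 pc pr pd pf hquad hω3 hw
  -- integer part
  obtain ⟨tc, htc⟩ : ∃ t : ℤ, Nc = S^2 - 3*t :=
    ⟨(a 0 0 + a 1 0 + a 2 0)*(a 0 1 + a 1 1 + a 2 1) +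
     (a 0 1 + a 1 1 + a 2 1)*(a 0 2 + a 1 2 + a 2 2) +
     (a 0 0 + a 1 0 + a 2 0)*(a 0 2 + a 1 2 + a 2 2), by rw [hNc, hXc, hYc, hS]; ring⟩
  obtain ⟨tr, htr⟩ : ∃ t : ℤ, Nr = S^2 - 3*t :=
    ⟨(a 0 0 + a 0 1 + a 0 2)*(a 1 0 + a 1 1 + a 1 2) +
     (a 1 0 + a 1 1 + a 1 2)*(a 2 0 + a 2 1 + a 2 2) +
     (a 0 0 + a 0 1 + a 0 2)*(a 2 0 + a 2 1 + a 2 2), by rw [hNr, hXr, hYr, hS]; ring⟩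
  obtain ⟨td, htd⟩ : ∃ t : ℤ, Nd = S^2 - 3*t :=
    ⟨(a 0 0 + a 1 2 + a 2 1)*(a 0 1 + a 1 0 + a 2 2) +
     (a 0 1 + a 1 0 + a 2 2)*(a 0 2 + a 1 1 + a 2 0) +
     (a 0 0 + a 1 2 + a 2 1)*(a 0 2 + a 1 1 + a 2 0), by rw [hNd, hXd, hYd, hS]; ring⟩
  obtain ⟨tf, htf⟩ : ∃ t : ℤ, Nf = S^2 - 3*t :=
    ⟨(a 0 0 + a 1 1 + a 2 2)*(a 1 0 + a 2 1 + a 0 2) +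
     (a 1 0 + a 2 1 + a 0 2)*(a 2 0 + a 0 1 + a 1 2) +
     (a 0 0 + a 1 1 + a 2 2)*(a 2 0 + a 0 1 + a 1 2), by rw [hNf, hXf, hYf, hS]; ring⟩
  have h3S : (3:ℤ) ∣ S := by
    have hm0 : ((m : ℤ) : ZMod 3) = 0 := (ZMod.intCast_zmod_eq_zero_iff_dvd m 3).mpr h3
    rw [hmz, htc, htr, htd, htf] at hm0
    push_cast at hm0
    have h30 : (3 : ZMod 3) = 0 := rfl
    rw [h30] at hm0
    have h9 : ((S:ℤ) : ZMod 3)^9 = 0 := by linear_combination hm0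
    have hS0 : ((S:ℤ) : ZMod 3) = 0 := pow_eq_zero_iff (by norm_num : (9:ℕ) ≠ 0) |>.mp h9
    exact (ZMod.intCast_zmod_eq_zero_iff_dvd S 3).mp hS0
  have h3Nc : (3:ℤ) ∣ Nc := by
    rw [htc]; exact dvd_sub (dvd_pow h3S (by norm_num)) (dvd_mul_right 3 tc)
  have h3Nr : (3:ℤ) ∣ Nr := by
    rw [htr]; exact dvd_sub (dvd_pow h3S (by norm_num)) (dvd_mul_right 3 tr)
  have h3Nd : (3:ℤ) ∣ Nd := by
    rw [htd]; exact dvd_sub (dvd_pow h3S (by norm_num)) (dvd_mul_right 3 td)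
  have h3Nf : (3:ℤ) ∣ Nf := by
    rw [htf]; exact dvd_sub (dvd_pow h3S (by norm_num)) (dvd_mul_right 3 tf)
  have key : ∀ x y : ZMod 3, x = 0 ∨ y = 0 ∨ x + y = 0 ∨ x + 2*y = 0 := by decide
  have hlinr : Xr + Yr + 3*(a 2 0 + a 2 1 + a 2 2) = S := by rw [hXr, hYr, hS]; ring
  have hlinc : Xc + Yc + 3*(a 0 2 + a 1 2 + a 2 2) = S := by rw [hXc, hYc, hS]; ring
  have hlind : Xd + Yd + 3*(a 0 2 + a 1 1 + a 2 0) = S := by rw [hXd, hYd, hS]; ring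
  have hlinf : Xf + Yf + 3*(a 2 0 + a 0 1 + a 1 2) = S := by rw [hXf, hYf, hS]; ring
  rcases key ((Yr : ℤ) : ZMod 3) ((Yc : ℤ) : ZMod 3) with h | h | h | h
  · have hY : (3:ℤ) ∣ Yr := (ZMod.intCast_zmod_eq_zero_iff_dvd Yr 3).mp h
    have hX : (3:ℤ) ∣ Xr := by
      rw [show Xr = S - Yr - 3*(a 2 0 + a 2 1 + a 2 2) from by linear_combination hlinr]
      exact dvd_sub (dvd_sub h3S hY) (dvd_mul_right 3 _)
    have h9N : (9:ℤ) ∣ Nr := by rw [hNr]; exact norm9 _ _ hX hY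
    exact final_dvd m S Nc Nd Nf Nr (by rw [hmz]; ring) h3S h3Nc h3Nd h3Nf h9N
  · have hY : (3:ℤ) ∣ Yc := (ZMod.intCast_zmod_eq_zero_iff_dvd Yc 3).mp h
    have hX : (3:ℤ) ∣ Xc := by
      rw [show Xc = S - Yc - 3*(a 0 2 + a 1 2 + a 2 2) from by linear_combination hlinc]
      exact dvd_sub (dvd_sub h3S hY) (dvd_mul_right 3 _)
    have h9N : (9:ℤ) ∣ Nc := by rw [hNc]; exact norm9 _ _ hX hY
    exact final_dvd m S Nr Nd Nf Nc (by rw [hmz]; ring) h3S h3Nr h3Nd h3Nf h9N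
  · have hsum : (3:ℤ) ∣ Yr + Yc := by
      have h1 : ((Yr + Yc : ℤ) : ZMod 3) = 0 := by push_cast; exact h
      exact (ZMod.intCast_zmod_eq_zero_iff_dvd _ 3).mp h1
    have hdiff : Yr + Yc - Yd = 3*(a 1 1 - a 2 2) := by rw [hYr, hYc, hYd]; ring
    have hY : (3:ℤ) ∣ Yd := by
      rw [show Yd = (Yr + Yc) - 3*(a 1 1 - a 2 2) from by linear_combination -hdiff]
      exact dvd_sub hsum (dvd_mul_right 3 _)
    have hX : (3:ℤ) ∣ Xd := by
      rw [show Xd = S - Yd - 3*(a 0 2 + a 1 1 + a 2 0) from by linear_combination hlind]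
      exact dvd_sub (dvd_sub h3S hY) (dvd_mul_right 3 _)
    have h9N : (9:ℤ) ∣ Nd := by rw [hNd]; exact norm9 _ _ hX hY
    exact final_dvd m S Nc Nr Nf Nd (by rw [hmz]; ring) h3S h3Nc h3Nr h3Nf h9N
  · have hsum : (3:ℤ) ∣ Yr + 2*Yc := by
      have h1 : ((Yr + 2*Yc : ℤ) : ZMod 3) = 0 := by push_cast; exact h
      exact (ZMod.intCast_zmod_eq_zero_iff_dvd _ 3).mp h1
    have hdiff : Yr + 2*Yc - Yf = 3*(a 1 1 - a 2 2 + a 0 1 - a 0 2) := by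
      rw [hYr, hYc, hYf]; ring
    have hY : (3:ℤ) ∣ Yf := by
      rw [show Yf = (Yr + 2*Yc) - 3*(a 1 1 - a 2 2 + a 0 1 - a 0 2) from by
        linear_combination -hdiff]
      exact dvd_sub hsum (dvd_mul_right 3 _)
    have hX : (3:ℤ) ∣ Xf := by
      rw [show Xf = S - Yf - 3*(a 2 0 + a 0 1 + a 1 2) from by linear_combination hlinf]
      exact dvd_sub (dvd_sub h3S hY) (dvd_mul_right 3 _)
    have h9N : (9:ℤ) ∣ Nf := by rw [hNf]; exact norm9 _ _ hX hY
    exact final_dvd m S Nc Nr Nd Nf hmz h3S h3Nc h3Nr h3Nd h9N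
end

section
/- Every prime p ≡ 7 (mod 12) can be written as p = N(α) where α = −1 + 2(1−ω)(2A+1 + Bω) for some integers A, B with B even, where ω is a primitive cube root of unity and N(x+yω) = x² − xy + y² is the norm on ℤ[ω]. -/
/-!
Since `3 ∣ p - 1`, `ZMod p` contains a primitive cube root of unity `ζ`, and `(2ζ + 1)² = -3`.
Thue's lemma then gives `u ≡ vc (mod p)` with `u², v² < p`, so `u² + 3v² = kp` with `k ∈ {1, 2, 3}`;
`k = 2` is impossible modulo 4 and `k = 3` forces `3 ∣ u`, hence `p = x² + 3y²`.
As `p ≡ 3 (mod 4)` and `p ≡ 1 (mod 3)`, `x` is even and prime to 3 while `y` is odd, so the signs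
of `a = ±x`, `b = ±y` can be chosen with `a ≡ 2 (mod 3)` and `a + b ≡ 1 (mod 4)`. Then
`α = (a + b) + 2bω` has norm `a² + 3b² = p` and is of the form `-1 + 2(1 - ω)(2A + 1 + Bω)`.
-/

open ComplexConjugate

theorem Int.sq_emod_four_eq_emod_two (x : ℤ) : x ^ 2 % 4 = x % 2 := by
  rcases Int.even_or_odd' x with ⟨k, rfl | rfl⟩ <;> ring_nf <;> omega

theorem IsPrimitiveRoot.sq_add_self_add_one {R : Type*} [CommRing R] [IsDomain R] {ζ : R}
    (hζ : IsPrimitiveRoot ζ 3) : ζ ^ 2 + ζ + 1 = 0 := by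
  have h := hζ.geom_sum_eq_zero (by norm_num)
  simp only [Finset.sum_range_succ, Finset.sum_range_zero, pow_zero, pow_one, zero_add] at h
  linear_combination h

theorem ZMod.exists_isPrimitiveRoot_three {p : ℕ} [Fact p.Prime] (hp : p % 3 = 1) :
    ∃ ζ : ZMod p, IsPrimitiveRoot ζ 3 := by
  have h3 : 3 ∣ Fintype.card (ZMod p)ˣ := by rw [ZMod.card_units]; omega
  obtain ⟨ζ, hζ⟩ := exists_prime_orderOf_dvd_card 3 h3
  exact ⟨ζ, IsPrimitiveRoot.coe_units_iff.mpr (hζ ▸ IsPrimitiveRoot.orderOf ζ)⟩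

theorem Nat.Prime.exists_dvd_sq_add_three {p : ℕ} (hp : p.Prime) (hp3 : p % 3 = 1) :
    ∃ c : ℤ, (p : ℤ) ∣ c ^ 2 + 3 := by
  have := Fact.mk hp
  obtain ⟨ζ, hζ⟩ := ZMod.exists_isPrimitiveRoot_three hp3
  obtain ⟨c, hc⟩ := ZMod.intCast_surjective (2 * ζ + 1)
  refine ⟨c, (ZMod.intCast_zmod_eq_zero_iff_dvd _ p).mp ?_⟩
  push_cast
  rw [hc]
  linear_combination 4 * hζ.sq_add_self_add_one

/-- Thue's lemma, obtained from Dirichlet's approximation of `c / m` by fractions with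
denominator at most `√m`. -/
theorem Int.exists_abs_le_sqrt_modEq_mul (m : ℕ) (hm : 0 < m) (c : ℤ) :
    ∃ u v : ℤ, 0 < v ∧ v ≤ m.sqrt ∧ |u| ≤ m.sqrt ∧ u ≡ v * c [ZMOD m] := by
  set n := m.sqrt
  obtain ⟨j, v, hv0, hvn, hjv⟩ :=
    Real.exists_int_int_abs_mul_sub_le (c / m : ℝ) (Nat.sqrt_pos.mpr hm)
  refine ⟨v * c - j * m, v, hv0, hvn, ?_, Int.modEq_iff_dvd.mpr ⟨j, by ring⟩⟩
  have hm' : (0 : ℝ) < m := by exact_mod_cast hm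
  have hmn : (m : ℝ) < (n + 1) ^ 2 := by exact_mod_cast Nat.lt_succ_sqrt' m
  have hu : |((v * c - j * m : ℤ) : ℝ)| < n + 1 :=
    calc |((v * c - j * m : ℤ) : ℝ)| = m * |v * (c / m : ℝ) - j| := by
          rw [← abs_of_pos hm', ← abs_mul, abs_of_pos hm']; push_cast; field_simp
      _ ≤ m * (1 / (n + 1)) := by gcongr
      _ < n + 1 := by rw [mul_one_div, div_lt_iff₀ (by positivity)]; nlinarith
  have : |v * c - j * m| < n + 1 := by exact_mod_cast hu
  omega

theorem Nat.Prime.exists_sq_add_three_mul_sq_of_dvd {p : ℕ} (hp : p.Prime) (hp2 : p ≠ 2) {c : ℤ}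
    (hc : (p : ℤ) ∣ c ^ 2 + 3) : ∃ x y : ℤ, x ^ 2 + 3 * y ^ 2 = p := by
  obtain ⟨u, v, hv0, hvn, hun, huv⟩ := Int.exists_abs_le_sqrt_modEq_mul p hp.pos c
  have hsqrt : p.sqrt ^ 2 < p := (Nat.sqrt_le' p).lt_of_ne fun h ↦
    hp.prime.not_isSquare ⟨p.sqrt, ((sq _).symm.trans h).symm⟩
  have hsqrt' : (p.sqrt : ℤ) ^ 2 < p := by exact_mod_cast hsqrt
  obtain ⟨k, hk⟩ : (p : ℤ) ∣ u ^ 2 + 3 * v ^ 2 := by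
    obtain ⟨j, hj⟩ := huv.dvd
    obtain ⟨i, hi⟩ := hc
    exact ⟨v ^ 2 * i - j * (v * c + u), by linear_combination v ^ 2 * hi - (v * c + u) * hj⟩
  have hu2 : u ^ 2 ≤ (p.sqrt : ℤ) ^ 2 := sq_le_sq' (abs_le.mp hun).1 (abs_le.mp hun).2
  have hv2 : v ^ 2 ≤ (p.sqrt : ℤ) ^ 2 := pow_le_pow_left₀ hv0.le hvn 2
  have hk0 : 0 < k := by nlinarith
  have hk4 : k < 4 := by nlinarith
  interval_cases k
  · exact ⟨u, v, by linarith⟩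
  · have := Int.sq_emod_four_eq_emod_two u
    have := Int.sq_emod_four_eq_emod_two v
    obtain ⟨q, rfl⟩ := hp.eq_two_or_odd'.resolve_left hp2
    push_cast at hk
    rcases Int.emod_two_eq_zero_or_one v with h | h <;> omega
  · obtain ⟨w, rfl⟩ : (3 : ℤ) ∣ u :=
      Int.prime_three.dvd_of_dvd_pow (n := 2) ⟨p - v ^ 2, by linear_combination hk⟩
    exact ⟨v, w, by linarith⟩

theorem Nat.Prime.exists_sq_add_three_mul_sq {p : ℕ} (hp : p.Prime) (hp3 : p % 3 = 1) :
    ∃ x y : ℤ, x ^ 2 + 3 * y ^ 2 = p :=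
  have ⟨_, hc⟩ := hp.exists_dvd_sq_add_three hp3
  hp.exists_sq_add_three_mul_sq_of_dvd (by omega) hc

def eisensteinNorm (x y : ℤ) : ℤ := x ^ 2 - x * y + y ^ 2

theorem IsPrimitiveRoot.conj_eq_sq {ζ : ℂ} (hζ : IsPrimitiveRoot ζ 3) : conj ζ = ζ ^ 2 := by
  rw [← Complex.inv_eq_conj (hζ.norm'_eq_one (by norm_num))]
  exact (eq_inv_of_mul_eq_one_left (by rw [← pow_succ, hζ.pow_eq_one])).symm

theorem IsPrimitiveRoot.mul_conj_eq_eisensteinNorm {ζ : ℂ} (hζ : IsPrimitiveRoot ζ 3) (x y : ℤ) :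
    (x + y * ζ) * conj (x + y * ζ) = eisensteinNorm x y := by
  simp only [map_add, map_mul, map_intCast, hζ.conj_eq_sq, eisensteinNorm]
  push_cast
  linear_combination (x * y + y ^ 2 * (ζ - 1)) * hζ.sq_add_self_add_one

theorem exists_eisensteinNorm_eq_of_sq_add_three_mul_sq {p x y : ℤ} (hp : p % 12 = 7)
    (hxy : x ^ 2 + 3 * y ^ 2 = p) :
    ∃ A B : ℤ, Even B ∧ eisensteinNorm (4 * A + 2 * B + 1) (4 * B - 4 * A - 2) = p := by
  have hx2 := Int.sq_emod_four_eq_emod_two x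
  have hy2 := Int.sq_emod_four_eq_emod_two y
  have hparity : x % 2 = 0 ∧ y % 2 = 1 := by
    rcases Int.emod_two_eq_zero_or_one y with h | h <;> omega
  have hx3 : x % 3 ≠ 0 := fun h ↦ by
    obtain ⟨w, rfl⟩ := Int.dvd_of_emod_eq_zero h
    have : p = 3 * (3 * w ^ 2 + y ^ 2) := by rw [← hxy]; ring
    omega
  obtain ⟨a, ha, ha3, ha2⟩ : ∃ a, a ^ 2 = x ^ 2 ∧ a % 3 = 2 ∧ a % 2 = 0 := by
    rcases (by omega : x % 3 = 1 ∨ x % 3 = 2) with h | h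
    · exact ⟨-x, by ring, by omega, by omega⟩
    · exact ⟨x, rfl, h, hparity.1⟩
  obtain ⟨b, hb, hab⟩ : ∃ b, b ^ 2 = y ^ 2 ∧ (a + b) % 4 = 1 := by
    rcases (by omega : (a + y) % 4 = 1 ∨ (a - y) % 4 = 1) with h | h
    · exact ⟨y, rfl, h⟩
    · exact ⟨-y, by ring, by omega⟩
  obtain ⟨K, hK⟩ : (12 : ℤ) ∣ a + 3 * b + 1 := by omega
  obtain ⟨J, hJ⟩ : (4 : ℤ) ∣ a + b - 1 := by omega
  refine ⟨J - K, 2 * K, even_two_mul K, ?_⟩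
  rw [show 4 * (J - K) + 2 * (2 * K) + 1 = a + b by linarith,
    show 4 * (2 * K) - 4 * (J - K) - 2 = 2 * b by linarith, eisensteinNorm]
  linear_combination ha + 3 * hb + hxy

theorem prime_7_mod_12_norm_form (p : ℕ) (hp : p.Prime) (h : p % 12 = 7) :
    let ω : ℂ := Complex.exp (2 * Real.pi * Complex.I / 3)
    ∃ A B : ℤ, Even B ∧
      (p : ℂ) = (-1 + 2*(1 - ω)*(2*(A:ℂ)+1 + (B:ℂ)*ω)) *
        (starRingEnd ℂ) (-1 + 2*(1 - ω)*(2*(A:ℂ)+1 + (B:ℂ)*ω)) := by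
  intro ω
  have hω : IsPrimitiveRoot ω 3 := Complex.isPrimitiveRoot_exp 3 (by norm_num)
  obtain ⟨x, y, hxy⟩ := hp.exists_sq_add_three_mul_sq (by omega)
  obtain ⟨A, B, hB, hN⟩ := exists_eisensteinNorm_eq_of_sq_add_three_mul_sq (by omega) hxy
  refine ⟨A, B, hB, ?_⟩
  have hα : -1 + 2 * (1 - ω) * (2 * (A : ℂ) + 1 + (B : ℂ) * ω) =
      ((4 * A + 2 * B + 1 : ℤ) : ℂ) + ((4 * B - 4 * A - 2 : ℤ) : ℂ) * ω := by
    push_cast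
    linear_combination (-2 * (B : ℂ)) * hω.sq_add_self_add_one
  rw [hα, hω.mul_conj_eq_eisensteinNorm, hN, Int.cast_natCast]
end

section
/- Every odd prime p with p ≡ 2 (mod 3) can be written as p = N(α) + 4N(β) for some α, β ∈ ℤ[ω] with N(α) ≡ 1 (mod 3) and N(β) ≡ 1 (mod 3), where N is the Eisenstein norm. -/
open Polynomial

private lemma eisNorm_nonneg (x y : ℤ) : 0 ≤ x^2 - x*y + y^2 := by
  nlinarith [sq_nonneg (x-y), sq_nonneg x, sq_nonneg y]

private lemma eisNorm_eq_zero {x y : ℤ} (h : x^2 - x*y + y^2 = 0) : x = 0 ∧ y = 0 := by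
  constructor <;> nlinarith [sq_nonneg (x-y), sq_nonneg (x+y), sq_nonneg x, sq_nonneg y]

private lemma core_ineq (m r s : ℤ) (h1 : 2*r ≤ m) (h3 : 2*s ≤ m) (h4 : -m ≤ 2*s)
    (h5 : m < 2*(r-s)) (h6 : 0 ≤ r+s) :
    16*((r-m)^2 - (r-m)*s + s^2) ≤ 7*m^2 := by
  nlinarith [mul_nonneg (by linarith : (0:ℤ) ≤ m - 2*r) (by linarith : (0:ℤ) ≤ m + 2*s),
             mul_nonneg (by linarith : (0:ℤ) ≤ 2*(r-s) - m) (by linarith : (0:ℤ) ≤ r + s),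
             mul_nonneg (by linarith : (0:ℤ) ≤ m - 2*r) (by linarith : (0:ℤ) ≤ 2*(r-s)-m),
             mul_nonneg (by linarith : (0:ℤ) ≤ m + 2*s) (by linarith : (0:ℤ) ≤ r+s),
             sq_nonneg (2*r+2*s-m), sq_nonneg (2*r-2*s-m), sq_nonneg (r+s)]

private lemma balanced (m t : ℤ) (hm : 0 < m) :
    ∃ r u : ℤ, r = t + m*u ∧ -m < 2*r ∧ 2*r ≤ m := by
  have h1 : 0 ≤ t % m := Int.emod_nonneg t hm.ne'
  have h2 : t % m < m := Int.emod_lt_of_pos t hm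
  have h3 : m * (t / m) + t % m = t := Int.mul_ediv_add_emod t m
  by_cases hc : 2*(t % m) ≤ m
  · exact ⟨t % m, -(t/m), by linear_combination h3, by omega, hc⟩
  · exact ⟨t % m - m, -(t/m) - 1, by linear_combination h3, by omega, by omega⟩

private lemma reduce (m x y : ℤ) (hm : 0 < m) :
    ∃ a b u v : ℤ, a = x + m*u ∧ b = y + m*v ∧ 16*(a^2 - a*b + b^2) ≤ 7*m^2 := by
  obtain ⟨r, u, hru, hr1, hr2⟩ := balanced m x hm
  obtain ⟨s, v, hsv, hs1, hs2⟩ := balanced m y hm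
  by_cases hA : 2*(r-s) ≤ m
  · by_cases hB : -m ≤ 2*(r-s)
    · refine ⟨r, s, u, v, hru, hsv, ?_⟩
      nlinarith [mul_nonneg (by linarith : (0:ℤ) ≤ m - 2*r) (by linarith : (0:ℤ) ≤ m + 2*r),
                 mul_nonneg (by linarith : (0:ℤ) ≤ m - 2*s) (by linarith : (0:ℤ) ≤ m + 2*s),
                 mul_nonneg (by linarith : (0:ℤ) ≤ m - 2*(r-s)) (by linarith : (0:ℤ) ≤ m + 2*(r-s)),
                 sq_nonneg m]
    · -- 2(r-s) < -m
      by_cases hC : 0 ≤ r + s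
      · refine ⟨r, s - m, u, v - 1, hru, by linear_combination hsv, ?_⟩
        have h := core_ineq m s r hs2 hr2 (by omega) (by omega) (by omega)
        linarith [h]
      · refine ⟨r + m, s, u + 1, v, by linear_combination hru, hsv, ?_⟩
        have h := core_ineq m (-r) (-s) (by omega) (by omega) (by omega) (by omega) (by omega)
        linarith [h]
  · -- m < 2(r-s)
    by_cases hC : 0 ≤ r + s
    · refine ⟨r - m, s, u - 1, v, by linear_combination hru, hsv, ?_⟩
      have h := core_ineq m r s hr2 hs2 (by omega) (by omega) hC
      linarith [h]
    · refine ⟨r, s + m, u, v + 1, hru, by linear_combination hsv, ?_⟩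
      have h := core_ineq m (-s) (-r) (by omega) (by omega) (by omega) (by omega) (by omega)
      linarith [h]

private lemma descent (p : ℕ) (hp : p.Prime) :
    ∀ m : ℕ, 0 < m → m < p →
      (∃ a1 a2 b1 b2 : ℤ, (m : ℤ) * p = (a1^2 - a1*a2 + a2^2) + (b1^2 - b1*b2 + b2^2)) →
      ∃ a1 a2 b1 b2 : ℤ, (p : ℤ) = (a1^2 - a1*a2 + a2^2) + (b1^2 - b1*b2 + b2^2) := by
  intro m
  induction m using Nat.strong_induction_on with
  | _ m ih =>
  intro hm0 hmp hex
  obtain ⟨a1, a2, b1, b2, habe⟩ := hex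
  rcases eq_or_ne m 1 with rfl | hm1
  · exact ⟨a1, a2, b1, b2, by simpa using habe⟩
  have hM0 : (0:ℤ) < (m:ℤ) := by exact_mod_cast hm0
  obtain ⟨c1, c2, u1, u2, hc1, hc2, hcb⟩ := reduce (m:ℤ) a1 a2 hM0
  obtain ⟨d1, d2, v1, v2, hd1, hd2, hdb⟩ := reduce (m:ℤ) b1 b2 hM0
  subst hc1; subst hc2; subst hd1; subst hd2
  obtain ⟨n, he⟩ : ∃ n : ℤ, (m:ℤ) * n =
      ((a1 + (m:ℤ)*u1)^2 - (a1 + (m:ℤ)*u1)*(a2 + (m:ℤ)*u2) + (a2 + (m:ℤ)*u2)^2)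
      + ((b1 + (m:ℤ)*v1)^2 - (b1 + (m:ℤ)*v1)*(b2 + (m:ℤ)*v2) + (b2 + (m:ℤ)*v2)^2) :=
    ⟨(p:ℤ) + (2*a1*u1 - a1*u2 - a2*u1 + 2*a2*u2 + (m:ℤ)*u1^2 - (m:ℤ)*u1*u2 + (m:ℤ)*u2^2
       + 2*b1*v1 - b1*v2 - b2*v1 + 2*b2*v2 + (m:ℤ)*v1^2 - (m:ℤ)*v1*v2 + (m:ℤ)*v2^2),
     by linear_combination habe⟩
  have h0 : (0:ℤ) ≤ ((a1 + (m:ℤ)*u1)^2 - (a1 + (m:ℤ)*u1)*(a2 + (m:ℤ)*u2) + (a2 + (m:ℤ)*u2)^2)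
      + ((b1 + (m:ℤ)*v1)^2 - (b1 + (m:ℤ)*v1)*(b2 + (m:ℤ)*v2) + (b2 + (m:ℤ)*v2)^2) :=
    add_nonneg (eisNorm_nonneg _ _) (eisNorm_nonneg _ _)
  have hnn : 0 ≤ n := by
    by_contra hneg
    push_neg at hneg
    have h1 : (m:ℤ) * n < 0 := mul_neg_of_pos_of_neg hM0 hneg
    rw [he] at h1
    linarith
  have hn_lt : n < (m:ℤ) := by
    nlinarith [hcb, hdb, he, hM0, mul_pos hM0 hM0]
  rcases eq_or_ne n 0 with hn0 | hn0
  · exfalso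
    rw [hn0, mul_zero] at he
    have h1 : (a1 + (m:ℤ)*u1)^2 - (a1 + (m:ℤ)*u1)*(a2 + (m:ℤ)*u2) + (a2 + (m:ℤ)*u2)^2 = 0 := by
      linarith [eisNorm_nonneg (a1 + (m:ℤ)*u1) (a2 + (m:ℤ)*u2),
                eisNorm_nonneg (b1 + (m:ℤ)*v1) (b2 + (m:ℤ)*v2)]
    have h2 : (b1 + (m:ℤ)*v1)^2 - (b1 + (m:ℤ)*v1)*(b2 + (m:ℤ)*v2) + (b2 + (m:ℤ)*v2)^2 = 0 := by
      linarith [eisNorm_nonneg (a1 + (m:ℤ)*u1) (a2 + (m:ℤ)*u2),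
                eisNorm_nonneg (b1 + (m:ℤ)*v1) (b2 + (m:ℤ)*v2)]
    obtain ⟨hz1, hz2⟩ := eisNorm_eq_zero h1
    obtain ⟨hz3, hz4⟩ := eisNorm_eq_zero h2
    have ha1 : a1 = -((m:ℤ)*u1) := by linarith
    have ha2 : a2 = -((m:ℤ)*u2) := by linarith
    have hb1 : b1 = -((m:ℤ)*v1) := by linarith
    have hb2 : b2 = -((m:ℤ)*v2) := by linarith
    subst ha1; subst ha2; subst hb1; subst hb2
    have hdvd : ((m:ℤ)) ∣ (p:ℤ) :=
      ⟨u1^2 - u1*u2 + u2^2 + (v1^2 - v1*v2 + v2^2), by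
        apply mul_left_cancel₀ hM0.ne'
        linear_combination habe⟩
    have hdvdn : m ∣ p := Int.natCast_dvd_natCast.mp hdvd
    rcases hp.eq_one_or_self_of_dvd m hdvdn with h | h <;> omega
  · have hMA1 : (m:ℤ) * ((p:ℤ) + (a1*u1 - a1*u2 + a2*u2 + b1*v1 - b1*v2 + b2*v2))
        = ((a1^2 - a1*a2 + a2^2) + (b1^2 - b1*b2 + b2^2))
          + (m:ℤ)*(a1*u1 - a1*u2 + a2*u2 + b1*v1 - b1*v2 + b2*v2) := by
      linear_combination habe
    have hfin : n * (p:ℤ) =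
        (((p:ℤ) + (a1*u1 - a1*u2 + a2*u2 + b1*v1 - b1*v2 + b2*v2))^2
          - ((p:ℤ) + (a1*u1 - a1*u2 + a2*u2 + b1*v1 - b1*v2 + b2*v2))
            * (a2*u1 - a1*u2 + b2*v1 - b1*v2)
          + (a2*u1 - a1*u2 + b2*v1 - b1*v2)^2)
        + ((b1*u1 - b2*u2 - a1*v1 + a2*v2)^2
          - (b1*u1 - b2*u2 - a1*v1 + a2*v2)
            * (b1*u2 + b2*u1 - b2*u2 - a1*v2 - a2*v1 + a2*v2)
          + (b1*u2 + b2*u1 - b2*u2 - a1*v2 - a2*v1 + a2*v2)^2) := by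
      have hM2 : ((m:ℤ)^2) ≠ 0 := pow_ne_zero 2 hM0.ne'
      apply mul_left_cancel₀ hM2
      calc (m:ℤ)^2 * (n * (p:ℤ)) = ((m:ℤ) * (p:ℤ)) * ((m:ℤ) * n) := by ring
        _ = (((a1^2 - a1*a2 + a2^2) + (b1^2 - b1*b2 + b2^2)))
            * (((a1 + (m:ℤ)*u1)^2 - (a1 + (m:ℤ)*u1)*(a2 + (m:ℤ)*u2) + (a2 + (m:ℤ)*u2)^2)
              + ((b1 + (m:ℤ)*v1)^2 - (b1 + (m:ℤ)*v1)*(b2 + (m:ℤ)*v2) + (b2 + (m:ℤ)*v2)^2)) := by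
            rw [habe, he]
        _ = ((((a1^2 - a1*a2 + a2^2) + (b1^2 - b1*b2 + b2^2))
              + (m:ℤ)*(a1*u1 - a1*u2 + a2*u2 + b1*v1 - b1*v2 + b2*v2))^2
            - (((a1^2 - a1*a2 + a2^2) + (b1^2 - b1*b2 + b2^2))
              + (m:ℤ)*(a1*u1 - a1*u2 + a2*u2 + b1*v1 - b1*v2 + b2*v2))
              * ((m:ℤ)*(a2*u1 - a1*u2 + b2*v1 - b1*v2))
            + ((m:ℤ)*(a2*u1 - a1*u2 + b2*v1 - b1*v2))^2)
            + (((m:ℤ)*(b1*u1 - b2*u2 - a1*v1 + a2*v2))^2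
            - ((m:ℤ)*(b1*u1 - b2*u2 - a1*v1 + a2*v2))
              * ((m:ℤ)*(b1*u2 + b2*u1 - b2*u2 - a1*v2 - a2*v1 + a2*v2))
            + ((m:ℤ)*(b1*u2 + b2*u1 - b2*u2 - a1*v2 - a2*v1 + a2*v2))^2) := by
            ring
        _ = (((m:ℤ) * ((p:ℤ) + (a1*u1 - a1*u2 + a2*u2 + b1*v1 - b1*v2 + b2*v2)))^2
            - ((m:ℤ) * ((p:ℤ) + (a1*u1 - a1*u2 + a2*u2 + b1*v1 - b1*v2 + b2*v2)))
              * ((m:ℤ)*(a2*u1 - a1*u2 + b2*v1 - b1*v2))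
            + ((m:ℤ)*(a2*u1 - a1*u2 + b2*v1 - b1*v2))^2)
            + (((m:ℤ)*(b1*u1 - b2*u2 - a1*v1 + a2*v2))^2
            - ((m:ℤ)*(b1*u1 - b2*u2 - a1*v1 + a2*v2))
              * ((m:ℤ)*(b1*u2 + b2*u1 - b2*u2 - a1*v2 - a2*v1 + a2*v2))
            + ((m:ℤ)*(b1*u2 + b2*u1 - b2*u2 - a1*v2 - a2*v1 + a2*v2))^2) := by
            rw [hMA1]
        _ = (m:ℤ)^2 * (_) := by ring
    have htn : ((n.toNat : ℤ)) = n := Int.toNat_of_nonneg hnn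
    refine ih n.toNat (by omega) (by omega) (by omega)
      ⟨(p:ℤ) + (a1*u1 - a1*u2 + a2*u2 + b1*v1 - b1*v2 + b2*v2),
       a2*u1 - a1*u2 + b2*v1 - b1*v2,
       b1*u1 - b2*u2 - a1*v1 + a2*v2,
       b1*u2 + b2*u1 - b2*u2 - a1*v2 - a2*v1 + a2*v2, ?_⟩
    rw [htn]; exact hfin

private lemma exists_sol (p : ℕ) (hp : p.Prime) (hodd : p % 2 = 1) :
    ∃ a1 a2 b1 b2 : ℤ, (p : ℤ) = (a1^2 - a1*a2 + a2^2) + (b1^2 - b1*b2 + b2^2) := by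
  haveI : Fact p.Prime := ⟨hp⟩
  have hcard : Fintype.card (ZMod p) % 2 = 1 := by rw [ZMod.card]; exact hodd
  obtain ⟨a, b, hab'⟩ := FiniteField.exists_root_sum_quadratic
    (f := (C 1 * X^2 + C (-1) * X + C 1 : (ZMod p)[X]))
    (g := (C 1 * X^2 + C 0 * X + C 0 : (ZMod p)[X]))
    (Polynomial.degree_quadratic one_ne_zero) (Polynomial.degree_quadratic one_ne_zero) hcard
  simp only [eval_add, eval_mul, eval_pow, eval_C, eval_X] at hab'
  have hab : a^2 - a + 1 + b^2 = 0 := by linear_combination hab'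
  have hdvd : (p:ℤ) ∣ (((a.val : ℤ))^2 - ((a.val : ℤ))*1 + 1^2)
      + (((b.val : ℤ))^2 - ((b.val : ℤ))*0 + 0^2) := by
    apply (ZMod.intCast_zmod_eq_zero_iff_dvd _ p).mp
    push_cast
    simp only [ZMod.natCast_val, ZMod.cast_id]
    linear_combination hab
  obtain ⟨k, hk⟩ := hdvd
  have hp0 : (0:ℤ) < (p:ℤ) := by exact_mod_cast hp.pos
  obtain ⟨c1, c2, u1, u2, hc1, hc2, hcb⟩ := reduce (p:ℤ) ((a.val : ℤ)) 1 hp0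
  obtain ⟨d1, d2, v1, v2, hd1, hd2, hdb⟩ := reduce (p:ℤ) ((b.val : ℤ)) 0 hp0
  rw [zero_add] at hd2
  subst hc1; subst hc2; subst hd1; subst hd2
  obtain ⟨n, he⟩ : ∃ n : ℤ, (p:ℤ) * n =
      (((a.val : ℤ) + (p:ℤ)*u1)^2 - ((a.val : ℤ) + (p:ℤ)*u1)*(1 + (p:ℤ)*u2) + (1 + (p:ℤ)*u2)^2)
      + (((b.val : ℤ) + (p:ℤ)*v1)^2 - ((b.val : ℤ) + (p:ℤ)*v1)*((p:ℤ)*v2) + ((p:ℤ)*v2)^2) :=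
    ⟨k + (2*(a.val : ℤ)*u1 - (a.val : ℤ)*u2 - u1 + 2*u2
        + (p:ℤ)*(u1^2 - u1*u2 + u2^2)
        + 2*(b.val : ℤ)*v1 - (b.val : ℤ)*v2 + (p:ℤ)*(v1^2 - v1*v2 + v2^2)),
     by linear_combination -hk⟩
  have h0 : (0:ℤ) ≤
      (((a.val : ℤ) + (p:ℤ)*u1)^2 - ((a.val : ℤ) + (p:ℤ)*u1)*(1 + (p:ℤ)*u2) + (1 + (p:ℤ)*u2)^2)
      + (((b.val : ℤ) + (p:ℤ)*v1)^2 - ((b.val : ℤ) + (p:ℤ)*v1)*((p:ℤ)*v2) + ((p:ℤ)*v2)^2) :=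
    add_nonneg (eisNorm_nonneg _ _) (eisNorm_nonneg _ _)
  have hnn : 0 ≤ n := by
    by_contra hneg
    push_neg at hneg
    have h1 : (p:ℤ) * n < 0 := mul_neg_of_pos_of_neg hp0 hneg
    rw [he] at h1
    linarith
  have hne : n ≠ 0 := by
    intro hn0
    rw [hn0, mul_zero] at he
    have h1 : (((a.val : ℤ) + (p:ℤ)*u1)^2 - ((a.val : ℤ) + (p:ℤ)*u1)*(1 + (p:ℤ)*u2)
        + (1 + (p:ℤ)*u2)^2) = 0 := by
      linarith [eisNorm_nonneg ((a.val : ℤ) + (p:ℤ)*u1) (1 + (p:ℤ)*u2),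
                eisNorm_nonneg ((b.val : ℤ) + (p:ℤ)*v1) ((p:ℤ)*v2)]
    have h2 := (eisNorm_eq_zero h1).2
    have : (p:ℤ) ∣ 1 := ⟨-u2, by linarith⟩
    have h3 := Int.le_of_dvd one_pos this
    have h4 := hp.two_le
    omega
  have hn_lt : n < (p:ℤ) := by
    nlinarith [hcb, hdb, he, hp0, mul_pos hp0 hp0]
  have htn : ((n.toNat : ℤ)) = n := Int.toNat_of_nonneg hnn
  apply descent p hp n.toNat (by omega) (by omega)
  exact ⟨(a.val : ℤ) + (p:ℤ)*u1, 1 + (p:ℤ)*u2, (b.val : ℤ) + (p:ℤ)*v1, (p:ℤ)*v2,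
    by rw [htn]; linear_combination he⟩

private lemma parity' (x y : ℤ) :
    (∃ s t : ℤ, x = 2*s ∧ y = 2*t) ∨ (x^2 - x*y + y^2) % 2 = 1 := by
  rcases Int.even_or_odd x with ⟨s, hs⟩ | ⟨s, hs⟩ <;>
    rcases Int.even_or_odd y with ⟨t, ht⟩ | ⟨t, ht⟩
  · exact Or.inl ⟨s, t, by omega, by omega⟩
  · right
    obtain ⟨w, hw⟩ : ∃ w, x^2 - x*y + y^2 = 2*w + 1 :=
      ⟨2*s^2 - 2*s*t - s + 2*t^2 + 2*t, by subst hs; subst ht; ring⟩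
    rw [hw]; omega
  · right
    obtain ⟨w, hw⟩ : ∃ w, x^2 - x*y + y^2 = 2*w + 1 :=
      ⟨2*s^2 + 2*s - 2*s*t - t + 2*t^2, by subst hs; subst ht; ring⟩
    rw [hw]; omega
  · right
    obtain ⟨w, hw⟩ : ∃ w, x^2 - x*y + y^2 = 2*w + 1 :=
      ⟨2*s^2 + 2*t^2 - 2*s*t + s + t, by subst hs; subst ht; ring⟩
    rw [hw]; omega

private lemma mod3' (x y : ℤ) :
    (x^2 - x*y + y^2) % 3 = 0 ∨ (x^2 - x*y + y^2) % 3 = 1 := by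
  obtain ⟨q, r, hqr, hr⟩ : ∃ q r : ℤ, x + y = 3*q + r ∧ (r = 0 ∨ r = 1 ∨ r = 2) :=
    ⟨(x+y)/3, (x+y)%3, by omega, by omega⟩
  rcases hr with rfl | rfl | rfl
  · left
    obtain ⟨w, hw⟩ : ∃ w, x^2 - x*y + y^2 = 3*w :=
      ⟨3*q^2 - x*y, by linear_combination (x + y + 3*q)*hqr⟩
    rw [hw]; omega
  · right
    obtain ⟨w, hw⟩ : ∃ w, x^2 - x*y + y^2 = 3*w + 1 :=
      ⟨3*q^2 + 2*q - x*y, by linear_combination (x + y + 3*q + 1)*hqr⟩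
    rw [hw]; omega
  · right
    obtain ⟨w, hw⟩ : ∃ w, x^2 - x*y + y^2 = 3*w + 1 :=
      ⟨3*q^2 + 4*q + 1 - x*y, by linear_combination (x + y + 3*q + 2)*hqr⟩
    rw [hw]; omega

theorem prime_2_mod_3_sum_of_norms (p : ℕ) (hp : p.Prime) (hodd : Odd p)
    (h3 : p % 3 = 2) :
    ∃ x₁ y₁ x₂ y₂ : ℤ,
      (p : ℤ) = (x₁^2 - x₁*y₁ + y₁^2) + 4*(x₂^2 - x₂*y₂ + y₂^2) ∧
      (x₁^2 - x₁*y₁ + y₁^2) % 3 = 1 ∧ (x₂^2 - x₂*y₂ + y₂^2) % 3 = 1 := by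
  have hodd' : p % 2 = 1 := Nat.odd_iff.mp hodd
  obtain ⟨a1, a2, b1, b2, habe⟩ := exists_sol p hp hodd'
  have key : ∀ G1 G2 : ℤ, (p:ℤ) = G1 + 4*G2 → G1 % 3 = 0 ∨ G1 % 3 = 1 →
      G2 % 3 = 0 ∨ G2 % 3 = 1 → G1 % 3 = 1 ∧ G2 % 3 = 1 := by
    intro G1 G2 h hA hB
    omega
  rcases parity' a1 a2 with ⟨s, t, hs, ht⟩ | hodd1 <;>
    rcases parity' b1 b2 with ⟨s', t', hs', ht'⟩ | hodd2
  · exfalso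
    subst hs; subst ht; subst hs'; subst ht'
    obtain ⟨W, hW⟩ : ∃ W : ℤ, (p:ℤ) = 4*W :=
      ⟨s^2 - s*t + t^2 + (s'^2 - s'*t' + t'^2), by linear_combination habe⟩
    omega
  · subst hs; subst ht
    have heq : (p:ℤ) = (b1^2 - b1*b2 + b2^2) + 4*(s^2 - s*t + t^2) := by
      linear_combination habe
    obtain ⟨h1, h2⟩ := key _ _ heq (mod3' b1 b2) (mod3' s t)
    exact ⟨b1, b2, s, t, heq, h1, h2⟩
  · subst hs'; subst ht'
    have heq : (p:ℤ) = (a1^2 - a1*a2 + a2^2) + 4*(s'^2 - s'*t' + t'^2) := by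
      linear_combination habe
    obtain ⟨h1, h2⟩ := key _ _ heq (mod3' a1 a2) (mod3' s' t')
    exact ⟨a1, a2, s', t', heq, h1, h2⟩
  · exfalso
    obtain ⟨G1, hG1⟩ : ∃ G, a1^2 - a1*a2 + a2^2 = G := ⟨_, rfl⟩
    obtain ⟨G2, hG2⟩ : ∃ G, b1^2 - b1*b2 + b2^2 = G := ⟨_, rfl⟩
    rw [hG1] at hodd1 habe
    rw [hG2] at hodd2 habe
    omega
end
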